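/- arXiv:2312.10517 — 8 statements merged into one kernel-verified Lean document; each statement's English description precedes it below -/
import Mathlib

section
/- Let g ≥ 2 and n ≥ 1 be integers, and let 𝗏 ≥ 2, 𝖾 ≥ 1 be integers with 𝗏 ≤ 𝖾 + 1. Let (g_1,…,g_𝗏) be nonnegative integers and (n_1,…,n_𝗏) positive integers satisfying g_1+⋯+g_𝗏 = g − 1 + 𝗏 − 𝖾, n_1+⋯+n_𝗏 = n + 2𝖾, and the stability condition 2g_i − 2 + n_i ≥ 1 for every i. Then ( (6g−5+2n)!!/(g!·24^g) )^{−1} · ∏_{i=1}^𝗏 ( (6g_i−5+2n_i)!!/(g_i!·24^{g_i}) ) ≤ ( 4^{2−𝗏+𝖾}/(2g−2+n)! ) · ∏_{i=1}^𝗏 (2g_i−2+n_i)!. -/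
open Finset

open Nat



lemma vand (m n i j : ℕ) : m.choose i * n.choose j ≤ (m + n).choose (i + j) := by
  rw [Nat.add_choose_eq]
  have h : ((i, j) : ℕ × ℕ) ∈ Finset.HasAntidiagonal.antidiagonal (i + j) :=
    Finset.HasAntidiagonal.mem_antidiagonal.mpr rfl
  exact Finset.single_le_sum (f := fun p : ℕ × ℕ => m.choose p.1 * n.choose p.2)
    (fun p _ => Nat.zero_le _) h

lemma df_odd (a : ℕ) : (2 * a)! = 2 ^ a * a ! * (2 * a - 1)‼ := by
  cases a with
  | zero => rfl
  | succ k =>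
    have h1 : 2 * (k + 1) = (2 * k + 1) + 1 := by ring
    have h2 : 2 * (k + 1) - 1 = 2 * k + 1 := by omega
    rw [h2, h1, Nat.factorial_eq_mul_doubleFactorial]
    have h3 : 2 * k + 1 + 1 = 2 * (k + 1) := by ring
    rw [h3, Nat.doubleFactorial_two_mul]

lemma sq_choose (a b : ℕ) :
    (a + b).choose a * (a + b).choose a ≤ (2 * (a + b)).choose (2 * a) := by
  have := vand (a + b) (a + b) a a
  have h1 : (a + b) + (a + b) = 2 * (a + b) := by ring
  have h2 : a + a = 2 * a := by ring
  rwa [h1, h2] at this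

lemma key (a b : ℕ) :
    (2 * a - 1)‼ * (2 * b - 1)‼ * (a + b).choose a ≤ (2 * (a + b) - 1)‼ := by
  have hfac : (a + b).choose a * a ! * b ! = (a + b)! := by
    have := Nat.choose_mul_factorial_mul_factorial (Nat.le_add_right a b)
    simpa using this
  -- multiply both sides by 2^(a+b) * a! * b! * (a+b)!
  have hpos : 0 < 2 ^ (a + b) * a ! * b ! * (a + b)! := by positivity
  refine Nat.le_of_mul_le_mul_right ?_ hpos
  calc (2 * a - 1)‼ * (2 * b - 1)‼ * (a + b).choose a *
        (2 ^ (a + b) * a ! * b ! * (a + b)!)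
      = ((2 ^ a * a ! * (2 * a - 1)‼) * (2 ^ b * b ! * (2 * b - 1)‼)) *
        ((a + b).choose a * (a + b)!) := by ring
    _ = (2 * a)! * (2 * b)! * ((a + b).choose a * ((a + b).choose a * (a ! * b !))) := by
        rw [← df_odd, ← df_odd]
        have : (a + b)! = (a + b).choose a * (a ! * b !) := by rw [← hfac]; ring
        rw [this]
    _ ≤ (2 * a)! * (2 * b)! * ((2 * (a + b)).choose (2 * a) * (a ! * b !)) := by
        have := sq_choose a b
        exact Nat.mul_le_mul_left _ (by
          rw [← mul_assoc]
          exact Nat.mul_le_mul_right _ this)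
    _ = ((2 * (a + b)).choose (2 * a) * (2 * a)! * (2 * (a + b) - 2 * a)!) * (a ! * b !) := by
        have : 2 * (a + b) - 2 * a = 2 * b := by omega
        rw [this]; ring
    _ = (2 * (a + b))! * (a ! * b !) := by
        rw [Nat.choose_mul_factorial_mul_factorial (by omega)]
    _ = (2 * (a + b) - 1)‼ * (2 ^ (a + b) * a ! * b ! * (a + b)!) := by
        rw [df_odd (a + b)]; ring

lemma natmerge (g1 d1 g2 d2 : ℕ) :
    (2 * (d1 + g1) - 1)‼ * (2 * (d2 + g2) - 1)‼ *
      ((d1 + d2).choose d1 * (g1 + g2).choose g1) ≤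
    (2 * ((d1 + d2) + (g1 + g2)) - 1)‼ := by
  have h1 := vand (d1 + d2) (g1 + g2) d1 g1
  have h2 := key (d1 + g1) (d2 + g2)
  calc (2 * (d1 + g1) - 1)‼ * (2 * (d2 + g2) - 1)‼ *
        ((d1 + d2).choose d1 * (g1 + g2).choose g1)
      ≤ (2 * (d1 + g1) - 1)‼ * (2 * (d2 + g2) - 1)‼ *
        ((d1 + d2 + (g1 + g2)).choose (d1 + g1)) := Nat.mul_le_mul_left _ h1
    _ ≤ (2 * ((d1 + g1) + (d2 + g2)) - 1)‼ := by
        have e : d1 + d2 + (g1 + g2) = d1 + g1 + (d2 + g2) := by ring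
        rw [e]; exact h2
    _ = (2 * ((d1 + d2) + (g1 + g2)) - 1)‼ := by ring_nf


noncomputable def bfun (G d : ℕ) : ℝ :=
  ((2 * (d + G) - 1)‼ : ℝ) / (G.factorial * 24 ^ G * d.factorial)

lemma bfun_nonneg (G d : ℕ) : 0 ≤ bfun G d := by
  unfold bfun; positivity

lemma bfun_merge (g1 d1 g2 d2 : ℕ) :
    bfun g1 d1 * bfun g2 d2 ≤ bfun (g1 + g2) (d1 + d2) := by
  unfold bfun
  rw [_root_.div_mul_div_comm, div_le_div_iff₀ (by positivity) (by positivity)]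
  have hd : (d1 + d2).choose d1 * d1.factorial * d2.factorial = (d1 + d2).factorial := by
    have := Nat.choose_mul_factorial_mul_factorial (Nat.le_add_right d1 d2)
    simpa using this
  have hg : (g1 + g2).choose g1 * g1.factorial * g2.factorial = (g1 + g2).factorial := by
    have := Nat.choose_mul_factorial_mul_factorial (Nat.le_add_right g1 g2)
    simpa using this
  have hkey : (((2 * (d1 + g1) - 1)‼ * (2 * (d2 + g2) - 1)‼ *
      ((d1 + d2).choose d1 * (g1 + g2).choose g1) : ℕ) : ℝ) ≤
      (((2 * ((d1 + d2) + (g1 + g2)) - 1)‼ : ℕ) : ℝ) := by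
    exact_mod_cast natmerge g1 d1 g2 d2
  calc ((2 * (d1 + g1) - 1)‼ : ℝ) * ((2 * (d2 + g2) - 1)‼ : ℝ) *
        ((g1 + g2).factorial * 24 ^ (g1 + g2) * (d1 + d2).factorial)
      = (((2 * (d1 + g1) - 1)‼ * (2 * (d2 + g2) - 1)‼ *
          ((d1 + d2).choose d1 * (g1 + g2).choose g1) : ℕ) : ℝ) *
        (g1.factorial * g2.factorial * 24 ^ (g1 + g2) * (d1.factorial * d2.factorial)) := by
        rw [← hd, ← hg]; push_cast; ring
    _ ≤ (((2 * ((d1 + d2) + (g1 + g2)) - 1)‼ : ℕ) : ℝ) *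
        (g1.factorial * g2.factorial * 24 ^ (g1 + g2) * (d1.factorial * d2.factorial)) := by
        apply mul_le_mul_of_nonneg_right hkey (by positivity)
    _ = ((2 * (d1 + d2 + (g1 + g2)) - 1)‼ : ℝ) *
        (g1.factorial * 24 ^ g1 * d1.factorial * (g2.factorial * 24 ^ g2 * d2.factorial)) := by
        push_cast; rw [pow_add]; ring

lemma bfun_prod {ι : Type*} (s : Finset ι) (f h : ι → ℕ) :
    ∏ i ∈ s, bfun (f i) (h i) ≤ bfun (∑ i ∈ s, f i) (∑ i ∈ s, h i) := by
  induction s using Finset.cons_induction with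
  | empty => simp [bfun]
  | cons a s ha ih =>
    rw [Finset.prod_cons, Finset.sum_cons, Finset.sum_cons]
    calc bfun (f a) (h a) * ∏ i ∈ s, bfun (f i) (h i)
        ≤ bfun (f a) (h a) * bfun (∑ i ∈ s, f i) (∑ i ∈ s, h i) :=
          mul_le_mul_of_nonneg_left ih (bfun_nonneg _ _)
      _ ≤ bfun (f a + ∑ i ∈ s, f i) (h a + ∑ i ∈ s, h i) := bfun_merge _ _ _ _

lemma scale (g K ℓ : ℕ) (hg : 2 ≤ g) (hK : 6 * g ≤ K + 3) (hℓ : ℓ ≤ g) :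
    24 ^ ℓ * g.factorial * (K - 2 * ℓ)‼ ≤ 4 ^ (ℓ + 1) * (g - ℓ).factorial * K‼ := by
  induction ℓ with
  | zero =>
    simp only [pow_zero, one_mul, Nat.sub_zero, Nat.mul_sub]
    calc g.factorial * (K - 0)‼ = 1 * (g.factorial * K‼) := by
          norm_num
      _ ≤ 4 ^ 1 * (g.factorial * K‼) := Nat.mul_le_mul_right _ (by norm_num)
      _ = 4 ^ (0 + 1) * g.factorial * K‼ := by ring
  | succ m ih =>
    have hm1 : m + 1 ≤ g := by omega
    have e2 : (g - m).factorial = (g - m) * (g - (m + 1)).factorial := by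
      have : g - m = (g - (m + 1)) + 1 := by omega
      rw [this, Nat.factorial_succ]
    cases Nat.eq_zero_or_pos m with
    | inl hm0 =>
      subst hm0
      -- goal: 24^1 * g! * (K - 2)‼ ≤ 4^2 * (g-1)! * K‼
      have hK2 : 2 ≤ K := by omega
      have eK : K‼ = K * (K - 2)‼ := by
        have : K = (K - 2) + 2 := by omega
        rw [this, Nat.doubleFactorial_add_two]
        congr 1 <;> omega
      have eg : g.factorial = g * (g - 1).factorial := by
        have : g = (g - 1) + 1 := by omega
        nth_rewrite 1 [this]
        rw [Nat.factorial_succ]; congr 1; omega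
      rw [eK, eg]
      have h24 : 24 * g ≤ 16 * K := by omega
      calc 24 ^ 1 * (g * (g - 1).factorial) * (K - 2 * 1)‼
          = (24 * g) * ((g - 1).factorial * (K - 2)‼) := by norm_num; ring
        _ ≤ (16 * K) * ((g - 1).factorial * (K - 2)‼) := Nat.mul_le_mul_right _ h24
        _ = 4 ^ (1 + 1) * (g - 1).factorial * (K * (K - 2)‼) := by ring
    | inr hm =>
      have ih' := ih (by omega)
      have hK2 : 2 ≤ K - 2 * m := by omega
      have e1 : (K - 2 * m)‼ = (K - 2 * m) * (K - 2 * (m + 1))‼ := by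
        have h : K - 2 * m = (K - 2 * (m + 1)) + 2 := by omega
        rw [h, Nat.doubleFactorial_add_two]
      rw [e1, e2] at ih'
      have hstepc : 24 * (g - m) ≤ 4 * (K - 2 * m) := by omega
      have hpos : 0 < K - 2 * m := by omega
      refine Nat.le_of_mul_le_mul_right ?_ hpos
      calc 24 ^ (m + 1) * g.factorial * (K - 2 * (m + 1))‼ * (K - 2 * m)
          = 24 * (24 ^ m * g.factorial * ((K - 2 * m) * (K - 2 * (m + 1))‼)) := by ring
        _ ≤ 24 * (4 ^ (m + 1) * ((g - m) * (g - (m + 1)).factorial) * K‼) :=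
            Nat.mul_le_mul_left _ ih'
        _ = (24 * (g - m)) * (4 ^ (m + 1) * (g - (m + 1)).factorial * K‼) := by ring
        _ ≤ (4 * (K - 2 * m)) * (4 ^ (m + 1) * (g - (m + 1)).factorial * K‼) :=
            Nat.mul_le_mul_right _ hstepc
        _ = 4 ^ (m + 1 + 1) * (g - (m + 1)).factorial * K‼ * (K - 2 * m) := by ring


lemma bfun_mul_fact (G d : ℕ) :
    bfun G d * (d.factorial : ℝ) = ((2 * (d + G) - 1)‼ : ℝ) / (G.factorial * 24 ^ G) := by
  have h1 : (d.factorial : ℝ) ≠ 0 := by positivity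
  have h2 : ((G.factorial : ℝ) * 24 ^ G) ≠ 0 := by positivity
  unfold bfun
  field_simp

lemma final_bound (g n ℓ : ℕ) (hg : 2 ≤ g) (hn : 1 ≤ n) (hℓ : ℓ ≤ g) :
    bfun (g - ℓ) (2 * g + n - 2) ≤
      (4 : ℝ) ^ (ℓ + 1) * ((6 * g + 2 * n - 5)‼ : ℝ) /
        ((g.factorial * 24 ^ g) * (2 * g + n - 2).factorial) := by
  have h1 : 2 * ((2 * g + n - 2) + (g - ℓ)) - 1 = 6 * g + 2 * n - 5 - 2 * ℓ := by omega
  rw [bfun, h1, div_le_div_iff₀ (by positivity) (by positivity)]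
  have hnat : (6 * g + 2 * n - 5 - 2 * ℓ)‼ * (g.factorial * 24 ^ g * (2 * g + n - 2).factorial)
      ≤ 4 ^ (ℓ + 1) * (6 * g + 2 * n - 5)‼ *
        ((g - ℓ).factorial * 24 ^ (g - ℓ) * (2 * g + n - 2).factorial) := by
    have hs := scale g (6 * g + 2 * n - 5) ℓ hg (by omega) hℓ
    have hp : (24 : ℕ) ^ g = 24 ^ ℓ * 24 ^ (g - ℓ) := by
      rw [← pow_add]; congr 1; omega
    calc (6 * g + 2 * n - 5 - 2 * ℓ)‼ *
          (g.factorial * 24 ^ g * (2 * g + n - 2).factorial)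
        = (24 ^ ℓ * g.factorial * (6 * g + 2 * n - 5 - 2 * ℓ)‼) *
          (24 ^ (g - ℓ) * (2 * g + n - 2).factorial) := by rw [hp]; ring
      _ ≤ (4 ^ (ℓ + 1) * (g - ℓ).factorial * (6 * g + 2 * n - 5)‼) *
          (24 ^ (g - ℓ) * (2 * g + n - 2).factorial) := Nat.mul_le_mul_right _ hs
      _ = 4 ^ (ℓ + 1) * (6 * g + 2 * n - 5)‼ *
          ((g - ℓ).factorial * 24 ^ (g - ℓ) * (2 * g + n - 2).factorial) := by ring
  exact_mod_cast hnat

/-- Double factorial estimate for the decorations of a separating stable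
graph: for `g ≥ 2`, `n ≥ 1`, `𝗏 ≥ 2`, `𝖾 ≥ 1` with `𝗏 ≤ 𝖾 + 1`, genus decorations
`g₁ + ⋯ + g_𝗏 = g − 1 + 𝗏 − 𝖾`, valencies `n₁ + ⋯ + n_𝗏 = n + 2𝖾` with `n_i ≥ 1` and
stability `2g_i − 2 + n_i ≥ 1`, one has
`((6g−5+2n)!!/(g!·24^g))⁻¹ · ∏ᵢ (6gᵢ−5+2nᵢ)!!/(gᵢ!·24^{gᵢ})
  ≤ (4^{2−𝗏+𝖾}/(2g−2+n)!) · ∏ᵢ (2gᵢ−2+nᵢ)!`. -/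
theorem stmt3 (g n v e : ℕ) (hg : 2 ≤ g) (hn : 1 ≤ n)
    (hv : 2 ≤ v) (he : 1 ≤ e) (hve : v ≤ e + 1)
    (gs ns : Fin v → ℕ) (hns : ∀ i, 1 ≤ ns i)
    (hgsum : (∑ i, (gs i : ℤ)) = (g : ℤ) - 1 + v - e)
    (hnsum : ∑ i, ns i = n + 2 * e)
    (hstab : ∀ i, 1 ≤ 2 * (gs i : ℤ) - 2 + (ns i : ℤ)) :
    ((Nat.doubleFactorial (6 * g + 2 * n - 5) : ℝ) / (g.factorial * 24 ^ g))⁻¹ *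
      ∏ i, (Nat.doubleFactorial (6 * gs i + 2 * ns i - 5) : ℝ) /
        ((gs i).factorial * 24 ^ (gs i)) ≤
    (4 : ℝ) ^ (e + 2 - v) / ((2 * g + n - 2).factorial : ℝ) *
      ∏ i, ((2 * gs i + ns i - 2).factorial : ℝ) := by
  have h3 : ∀ i, 3 ≤ 2 * gs i + ns i := fun i => by have := hstab i; omega
  -- sums
  have hgsum' : ((∑ i, gs i : ℕ) : ℤ) = (g : ℤ) - 1 + (v : ℤ) - e := by
    push_cast; rw [hgsum]
  have hsg : ∑ i, gs i = g - (e + 1 - v) := by omega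
  have hlg : e + 1 - v ≤ g := by omega
  have hsum2 : ∑ i, (2 * gs i + ns i - 2 + 2) = 2 * (∑ i, gs i) + ∑ i, ns i := by
    rw [Finset.mul_sum, ← Finset.sum_add_distrib]
    exact Finset.sum_congr rfl (fun i _ => by have := h3 i; omega)
  have hsd : ∑ i, (2 * gs i + ns i - 2) = 2 * g + n - 2 := by
    rw [Finset.sum_add_distrib, Finset.sum_const, Finset.card_univ,
      Fintype.card_fin, smul_eq_mul] at hsum2
    omega
  -- rewrite the left product
  have hprod : (∏ i, ((6 * gs i + 2 * ns i - 5)‼ : ℝ) / ((gs i).factorial * 24 ^ (gs i)))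
      = (∏ i, bfun (gs i) (2 * gs i + ns i - 2)) *
        ∏ i, (((2 * gs i + ns i - 2).factorial : ℝ)) := by
    rw [← Finset.prod_mul_distrib]
    refine Finset.prod_congr rfl (fun i _ => ?_)
    have e1 : 2 * ((2 * gs i + ns i - 2) + gs i) - 1 = 6 * gs i + 2 * ns i - 5 := by
      have := h3 i; omega
    rw [bfun_mul_fact, e1]
  have hb : ∏ i, bfun (gs i) (2 * gs i + ns i - 2) ≤
      bfun (g - (e + 1 - v)) (2 * g + n - 2) := by
    have := bfun_prod Finset.univ gs (fun i => 2 * gs i + ns i - 2)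
    rwa [hsg, hsd] at this
  have hfin := final_bound g n (e + 1 - v) hg hn hlg
  have hev : e + 2 - v = (e + 1 - v) + 1 := by omega
  have hPd : (0:ℝ) ≤ ∏ i, (((2 * gs i + ns i - 2).factorial : ℝ)) :=
    Finset.prod_nonneg (fun i _ => by positivity)
  have hAinv : (0:ℝ) ≤ (((6 * g + 2 * n - 5)‼ : ℝ) / (g.factorial * 24 ^ g))⁻¹ := by
    positivity
  have key : (∏ i, ((6 * gs i + 2 * ns i - 5)‼ : ℝ) / ((gs i).factorial * 24 ^ (gs i)))
      ≤ ((4 : ℝ) ^ ((e + 1 - v) + 1) * ((6 * g + 2 * n - 5)‼ : ℝ) /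
          ((g.factorial * 24 ^ g) * (2 * g + n - 2).factorial)) *
        ∏ i, (((2 * gs i + ns i - 2).factorial : ℝ)) := by
    rw [hprod]
    exact mul_le_mul_of_nonneg_right (hb.trans hfin) hPd
  calc (((6 * g + 2 * n - 5)‼ : ℝ) / (g.factorial * 24 ^ g))⁻¹ *
        ∏ i, ((6 * gs i + 2 * ns i - 5)‼ : ℝ) / ((gs i).factorial * 24 ^ (gs i))
      ≤ (((6 * g + 2 * n - 5)‼ : ℝ) / (g.factorial * 24 ^ g))⁻¹ *
        (((4 : ℝ) ^ ((e + 1 - v) + 1) * ((6 * g + 2 * n - 5)‼ : ℝ) /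
          ((g.factorial * 24 ^ g) * (2 * g + n - 2).factorial)) *
        ∏ i, (((2 * gs i + ns i - 2).factorial : ℝ))) :=
        mul_le_mul_of_nonneg_left key hAinv
    _ = (4 : ℝ) ^ (e + 2 - v) / ((2 * g + n - 2).factorial : ℝ) *
        ∏ i, (((2 * gs i + ns i - 2).factorial : ℝ)) := by
        rw [hev]
        have h1 : ((6 * g + 2 * n - 5)‼ : ℝ) ≠ 0 := by positivity
        have h2 : ((g.factorial : ℝ)) ≠ 0 := by positivity
        have h3 : ((24:ℝ) ^ g) ≠ 0 := by positivity
        have h4 : (((2 * g + n - 2).factorial : ℝ)) ≠ 0 := by positivity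
        field_simp
end

section
/- Let k and n be integers with 2 ≤ k ≤ n. Then ∑ (n_1!·n_2!·⋯·n_k!)/n! ≤ 4/n, where the sum runs over all tuples (n_1,…,n_k) of positive integers with n_1 + ⋯ + n_k = n. -/
open Finset

lemma aux1 (a b : ℕ) (ha : 1 ≤ a) (hb : 1 ≤ b) :
    a.factorial * b.factorial ≤ (a + b - 1).factorial := by
  have h1 : b - 1 ≤ a + b - 1 := by omega
  have e1 := Nat.choose_mul_factorial_mul_factorial h1
  rw [show (a + b - 1) - (b - 1) = a by omega] at e1
  have hc : b ≤ (a + b - 1).choose (b - 1) := by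
    calc b = b.choose (b - 1) := by
            rw [Nat.choose_symm hb, Nat.choose_one_right]
    _ ≤ (a + b - 1).choose (b - 1) := Nat.choose_le_choose _ (by omega)
  have hb' : b.factorial = b * (b - 1).factorial := by
    conv_lhs => rw [show b = (b - 1) + 1 by omega]
    rw [Nat.factorial_succ, show b - 1 + 1 = b by omega]
  calc a.factorial * b.factorial = b * ((b - 1).factorial * a.factorial) := by rw [hb']; ring
  _ ≤ (a + b - 1).choose (b - 1) * ((b - 1).factorial * a.factorial) :=
      Nat.mul_le_mul_right _ hc
  _ = (a + b - 1).factorial := by rw [← e1]; ring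

lemma aux2 (a b : ℕ) (ha : 2 ≤ a) (hb : 2 ≤ b) :
    a.factorial * b.factorial ≤ 2 * (a + b - 2).factorial := by
  have h1 : b - 2 ≤ a + b - 2 := by omega
  have e1 := Nat.choose_mul_factorial_mul_factorial h1
  rw [show (a + b - 2) - (b - 2) = a by omega] at e1
  have e2 := Nat.choose_mul_factorial_mul_factorial (by omega : b - 2 ≤ b)
  rw [show b - (b - 2) = 2 by omega] at e2
  have hc : b.choose (b - 2) ≤ (a + b - 2).choose (b - 2) :=
    Nat.choose_le_choose _ (by omega)
  calc a.factorial * b.factorial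
      = (b.choose (b - 2) * (b - 2).factorial * (2).factorial) * a.factorial := by
        rw [e2, mul_comm]
  _ ≤ ((a + b - 2).choose (b - 2) * (b - 2).factorial * (2).factorial) * a.factorial := by
      gcongr
  _ = 2 * (a + b - 2).factorial := by
      rw [← e1]; simp [Nat.factorial]; ring

lemma Srec (k n : ℕ) :
    ∑ f ∈ (Finset.Nat.antidiagonalTuple (k+1) n).filter (fun f => ∀ i, 1 ≤ f i),
      (∏ i, ((f i).factorial : ℝ)) / (n.factorial : ℝ)
    = ∑ m ∈ Finset.Icc 1 (n - k),
        ((m.factorial : ℝ) * ((n - m).factorial : ℝ) / (n.factorial : ℝ)) *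
          ∑ g ∈ (Finset.Nat.antidiagonalTuple k (n - m)).filter (fun g => ∀ i, 1 ≤ g i),
            (∏ i, ((g i).factorial : ℝ)) / ((n - m).factorial : ℝ) := by
  simp_rw [Finset.mul_sum]
  rw [← Finset.sum_sigma (Finset.Icc 1 (n-k))
    (fun m => (Finset.Nat.antidiagonalTuple k (n - m)).filter (fun g => ∀ i, 1 ≤ g i))
    (fun p => ((p.1.factorial : ℝ) * ((n - p.1).factorial : ℝ) / (n.factorial : ℝ)) *
      ((∏ i, ((p.2 i).factorial : ℝ)) / ((n - p.1).factorial : ℝ)))]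
  refine Finset.sum_nbij' (i := fun f => ⟨f 0, Fin.tail f⟩)
    (j := fun p => Fin.cons p.1 p.2) ?_ ?_ ?_ ?_ ?_
  · rintro f hf
    simp only [Finset.mem_filter, Finset.Nat.mem_antidiagonalTuple] at hf
    obtain ⟨hsum, hpos⟩ := hf
    rw [Fin.sum_univ_succ] at hsum
    have hge : k ≤ ∑ i : Fin k, f i.succ := by
      calc k = ∑ _i : Fin k, 1 := by simp
      _ ≤ _ := Finset.sum_le_sum fun i _ => hpos i.succ
    simp only [Finset.mem_sigma, Finset.mem_Icc, Finset.mem_filter,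
      Finset.Nat.mem_antidiagonalTuple, Fin.tail]
    exact ⟨⟨hpos 0, by omega⟩, by omega, fun i => hpos i.succ⟩
  · rintro ⟨m, g⟩ hp
    simp only [Finset.mem_sigma, Finset.mem_Icc] at hp
    obtain ⟨⟨hm1, hm2⟩, hg⟩ := hp
    simp only [Finset.mem_filter, Finset.Nat.mem_antidiagonalTuple] at hg ⊢
    constructor
    · rw [Fin.sum_univ_succ]
      simp only [Fin.cons_zero, Fin.cons_succ]
      have h1 := hg.1
      have : n - k ≤ n := Nat.sub_le _ _
      omega
    · intro i
      refine Fin.cases ?_ ?_ i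
      · simpa using hm1
      · intro j; simpa using hg.2 j
  · intro f hf; exact Fin.cons_self_tail f
  · rintro ⟨m, g⟩ hp
    simp [Fin.tail_cons]
  · intro f hf
    simp only [Finset.mem_filter, Finset.Nat.mem_antidiagonalTuple] at hf
    have hx : ((n - f 0).factorial : ℝ) ≠ 0 := Nat.cast_ne_zero.2 (Nat.factorial_ne_zero _)
    have hn : ((n).factorial : ℝ) ≠ 0 := Nat.cast_ne_zero.2 (Nat.factorial_ne_zero _)
    rw [Fin.prod_univ_succ]
    simp only [Fin.tail]
    field_simp

lemma S1 (j : ℕ) (hj : 1 ≤ j) :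
    ∑ g ∈ (Finset.Nat.antidiagonalTuple 1 j).filter (fun g => ∀ i, 1 ≤ g i),
      (∏ i, ((g i).factorial : ℝ)) / (j.factorial : ℝ) = 1 := by
  rw [Finset.Nat.antidiagonalTuple_one, Finset.filter_singleton, if_pos]
  · rw [Finset.sum_singleton, Fin.prod_univ_one]
    simp only [Matrix.cons_val_zero]
    exact div_self (Nat.cast_ne_zero.2 (Nat.factorial_ne_zero _))
  · intro i
    fin_cases i
    simpa using hj

lemma base2 (n : ℕ) (hn : 2 ≤ n) :
    ∑ f ∈ (Finset.Nat.antidiagonalTuple 2 n).filter (fun f => ∀ i, 1 ≤ f i),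
      (∏ i, ((f i).factorial : ℝ)) / (n.factorial : ℝ) ≤ 4 / n := by
  show ∑ f ∈ (Finset.Nat.antidiagonalTuple (1+1) n).filter (fun f => ∀ i, 1 ≤ f i),
      (∏ i, ((f i).factorial : ℝ)) / (n.factorial : ℝ) ≤ 4 / n
  rw [Srec]
  have hrw : ∀ m ∈ Finset.Icc 1 (n - 1),
      ((m.factorial : ℝ) * ((n - m).factorial : ℝ) / (n.factorial : ℝ)) *
        (∑ g ∈ (Finset.Nat.antidiagonalTuple 1 (n - m)).filter (fun g => ∀ i, 1 ≤ g i),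
          (∏ i, ((g i).factorial : ℝ)) / ((n - m).factorial : ℝ))
      = (m.factorial : ℝ) * ((n - m).factorial : ℝ) / (n.factorial : ℝ) := by
    intro m hm
    rw [Finset.mem_Icc] at hm
    rw [S1 (n - m) (by omega), mul_one]
  rw [Finset.sum_congr rfl hrw]
  -- now bound ∑ m ∈ Icc 1 (n-1), m! (n-m)! / n!
  rcases lt_or_ge n 4 with h4 | h4
  · interval_cases n
    · norm_num [show Finset.Icc 1 1 = {1} from rfl, Nat.factorial]
    · norm_num [show Finset.Icc 1 2 = {1, 2} from rfl, Nat.factorial]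
  · have hsplit : Finset.Icc 1 (n - 1) = insert 1 (insert (n - 1) (Finset.Icc 2 (n - 2))) := by
      ext x
      simp only [Finset.mem_Icc, Finset.mem_insert]
      omega
    have h1notin : (1 : ℕ) ∉ insert (n - 1) (Finset.Icc 2 (n - 2)) := by
      simp only [Finset.mem_insert, Finset.mem_Icc]
      omega
    have h2notin : n - 1 ∉ Finset.Icc 2 (n - 2) := by
      simp only [Finset.mem_Icc]; omega
    rw [hsplit, Finset.sum_insert h1notin, Finset.sum_insert h2notin]
    have hF : (0:ℝ) < ((n - 2).factorial : ℝ) := by positivity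
    have hfac : (n.factorial : ℝ) = (n : ℝ) * ((n:ℝ) - 1) * ((n - 2).factorial : ℝ) := by
      have e1 : n * (n - 1).factorial = n.factorial := Nat.mul_factorial_pred (by omega)
      have e2 : (n - 1) * (n - 1 - 1).factorial = (n - 1).factorial :=
        Nat.mul_factorial_pred (by omega)
      rw [show n - 1 - 1 = n - 2 by omega] at e2
      rw [← e1, ← e2]
      push_cast [Nat.cast_sub (show 1 ≤ n by omega)]
      ring
    have hterm1 : ((Nat.factorial 1 : ℕ) : ℝ) * ((n - 1).factorial : ℝ) / (n.factorial : ℝ)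
        = 1 / n := by
      have e2 : (n - 1) * (n - 2).factorial = (n - 1).factorial := by
        have := Nat.mul_factorial_pred (show n - 1 ≠ 0 by omega)
        rwa [show n - 1 - 1 = n - 2 by omega] at this
      rw [Nat.factorial_one, Nat.cast_one, one_mul,
        show (n.factorial : ℝ) = (n:ℝ) * ((n-1).factorial : ℝ) by
          exact_mod_cast (Nat.mul_factorial_pred (show n ≠ 0 by omega)).symm]
      rw [div_eq_div_iff (by positivity) (by positivity)]
      ring
    have hterm2 : (((n-1).factorial : ℕ) : ℝ) * ((n - (n-1)).factorial : ℝ) / (n.factorial : ℝ)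
        = 1 / n := by
      rw [show n - (n - 1) = 1 by omega]
      rw [mul_comm]
      exact hterm1
    have hmid : ∑ m ∈ Finset.Icc 2 (n-2),
        ((m.factorial : ℝ) * ((n - m).factorial : ℝ) / (n.factorial : ℝ))
        ≤ ((n:ℝ) - 3) * (2 * ((n - 2).factorial : ℝ) / (n.factorial : ℝ)) := by
      have hb : ∀ m ∈ Finset.Icc 2 (n-2),
          ((m.factorial : ℝ) * ((n - m).factorial : ℝ) / (n.factorial : ℝ))
          ≤ 2 * ((n - 2).factorial : ℝ) / (n.factorial : ℝ) := by
        intro m hm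
        rw [Finset.mem_Icc] at hm
        have hN : m.factorial * (n - m).factorial ≤ 2 * (n - 2).factorial := by
          have := aux2 m (n - m) hm.1 (by omega)
          rwa [show m + (n - m) - 2 = n - 2 by omega] at this
        have := (Nat.cast_le (α := ℝ)).2 hN
        push_cast at this
        have hnf : (0:ℝ) ≤ (n.factorial : ℝ) := by positivity
        exact div_le_div_of_nonneg_right this hnf
      calc ∑ m ∈ Finset.Icc 2 (n-2), ((m.factorial : ℝ) * ((n - m).factorial : ℝ) / (n.factorial : ℝ))
          ≤ ∑ _m ∈ Finset.Icc 2 (n-2), 2 * ((n - 2).factorial : ℝ) / (n.factorial : ℝ) :=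
            Finset.sum_le_sum hb
      _ = ((n:ℝ) - 3) * (2 * ((n - 2).factorial : ℝ) / (n.factorial : ℝ)) := by
          rw [Finset.sum_const, Nat.card_Icc, nsmul_eq_mul]
          congr 1
          push_cast [show n - 2 + 1 - 2 = n - 3 by omega, Nat.cast_sub (show 3 ≤ n by omega)]
          ring
    rw [hterm1, hterm2]
    have hlast : ((n:ℝ) - 3) * (2 * ((n - 2).factorial : ℝ) / (n.factorial : ℝ)) ≤ 2 / n := by
      have hn4 : (4:ℝ) ≤ (n:ℝ) := by exact_mod_cast h4
      rw [hfac, show ((n:ℝ) - 3) * (2 * ((n - 2).factorial : ℝ) /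
          ((n : ℝ) * ((n:ℝ) - 1) * ((n - 2).factorial : ℝ)))
          = (((n:ℝ) - 3) * 2 * ((n - 2).factorial : ℝ)) /
            ((n : ℝ) * ((n:ℝ) - 1) * ((n - 2).factorial : ℝ)) by ring]
      have hn0 : (0:ℝ) < (n:ℝ) := by linarith
      have hn1 : (0:ℝ) < (n:ℝ) - 1 := by linarith
      rw [div_le_div_iff₀ (mul_pos (mul_pos hn0 hn1) hF) hn0]
      nlinarith [hF, hn4]
    calc 1/(n:ℝ) + (1/(n:ℝ) + ∑ m ∈ Finset.Icc 2 (n-2),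
        ((m.factorial : ℝ) * ((n - m).factorial : ℝ) / (n.factorial : ℝ)))
        ≤ 1/(n:ℝ) + (1/(n:ℝ) + 2/(n:ℝ)) := by
          have := hmid.trans hlast
          linarith
    _ = 4 / n := by ring

/-- Let `2 ≤ k ≤ n`. Then the sum of `n₁! ⋯ n_k! / n!` over all tuples
`(n₁, …, n_k)` of positive integers with `n₁ + ⋯ + n_k = n` is at most `4 / n`. -/
theorem stmt5 (k n : ℕ) (hk : 2 ≤ k) (hkn : k ≤ n) :
    ∑ f ∈ (Finset.Nat.antidiagonalTuple k n).filter (fun f => ∀ i, 1 ≤ f i),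
      (∏ i, ((f i).factorial : ℝ)) / (n.factorial : ℝ) ≤ 4 / n := by
  induction k, hk using Nat.le_induction generalizing n with
  | base => exact base2 n hkn
  | succ k hk ih =>
    rw [Srec]
    have hn3 : 3 ≤ n := by omega
    have hterm : ∀ m ∈ Finset.Icc 1 (n - k),
        ((m.factorial : ℝ) * ((n - m).factorial : ℝ) / (n.factorial : ℝ)) *
          (∑ g ∈ (Finset.Nat.antidiagonalTuple k (n - m)).filter (fun g => ∀ i, 1 ≤ g i),
            (∏ i, ((g i).factorial : ℝ)) / ((n - m).factorial : ℝ))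
        ≤ 4 * ((n - 2).factorial : ℝ) / (n.factorial : ℝ) := by
      intro m hm
      rw [Finset.mem_Icc] at hm
      obtain ⟨hm1, hm2⟩ := hm
      have hkm : k ≤ n - m := by omega
      have hIH := ih (n - m) hkm
      have hcoef : (0:ℝ) ≤ (m.factorial : ℝ) * ((n - m).factorial : ℝ) / (n.factorial : ℝ) := by
        positivity
      calc ((m.factorial : ℝ) * ((n - m).factorial : ℝ) / (n.factorial : ℝ)) *
            (∑ g ∈ (Finset.Nat.antidiagonalTuple k (n - m)).filter (fun g => ∀ i, 1 ≤ g i),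
              (∏ i, ((g i).factorial : ℝ)) / ((n - m).factorial : ℝ))
          ≤ ((m.factorial : ℝ) * ((n - m).factorial : ℝ) / (n.factorial : ℝ)) *
              (4 / ((n - m : ℕ) : ℝ)) := mul_le_mul_of_nonneg_left hIH hcoef
      _ ≤ 4 * ((n - 2).factorial : ℝ) / (n.factorial : ℝ) := by
          have hN : m.factorial * (n - m).factorial ≤ (n - 2).factorial * (n - m) := by
            have h := aux1 m (n - m - 1) hm1 (by omega)
            rw [show m + (n - m - 1) - 1 = n - 2 by omega] at h
            calc m.factorial * (n - m).factorial
                = (m.factorial * (n - m - 1).factorial) * (n - m) := by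
                  rw [← Nat.mul_factorial_pred (show n - m ≠ 0 by omega)]
                  ring
            _ ≤ (n - 2).factorial * (n - m) := Nat.mul_le_mul_right _ h
          have hNr := (Nat.cast_le (α := ℝ)).2 hN
          push_cast at hNr
          have hnm : (0:ℝ) < ((n - m : ℕ) : ℝ) := by
            have : 0 < n - m := by omega
            exact_mod_cast this
          have hnf : (0:ℝ) < (n.factorial : ℝ) := by positivity
          rw [div_mul_div_comm, div_le_div_iff₀ (by positivity) hnf]
          nlinarith [hnf, hnm]
    calc ∑ m ∈ Finset.Icc 1 (n - k),
          ((m.factorial : ℝ) * ((n - m).factorial : ℝ) / (n.factorial : ℝ)) *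
            (∑ g ∈ (Finset.Nat.antidiagonalTuple k (n - m)).filter (fun g => ∀ i, 1 ≤ g i),
              (∏ i, ((g i).factorial : ℝ)) / ((n - m).factorial : ℝ))
        ≤ ∑ _m ∈ Finset.Icc 1 (n - k), 4 * ((n - 2).factorial : ℝ) / (n.factorial : ℝ) :=
          Finset.sum_le_sum hterm
    _ = ((n - k : ℕ) : ℝ) * (4 * ((n - 2).factorial : ℝ) / (n.factorial : ℝ)) := by
        rw [Finset.sum_const, Nat.card_Icc, show n - k + 1 - 1 = n - k by omega,
          nsmul_eq_mul]
    _ ≤ 4 / n := by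
        have hfac : (n.factorial : ℝ) = (n : ℝ) * ((n:ℝ) - 1) * ((n - 2).factorial : ℝ) := by
          have e1 : n * (n - 1).factorial = n.factorial := Nat.mul_factorial_pred (by omega)
          have e2 : (n - 1) * (n - 1 - 1).factorial = (n - 1).factorial :=
            Nat.mul_factorial_pred (by omega)
          rw [show n - 1 - 1 = n - 2 by omega] at e2
          rw [← e1, ← e2]
          push_cast [Nat.cast_sub (show 1 ≤ n by omega)]
          ring
        have hF : (0:ℝ) < ((n - 2).factorial : ℝ) := by positivity
        have hnk : ((n - k : ℕ) : ℝ) ≤ (n:ℝ) - 1 := by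
          push_cast [Nat.cast_sub (show k ≤ n by omega)]
          have : (1:ℝ) ≤ (k:ℝ) := by exact_mod_cast (by omega : 1 ≤ k)
          linarith
        have hn0 : (0:ℝ) < (n:ℝ) := by positivity
        have hn1 : (0:ℝ) < (n:ℝ) - 1 := by
          have : (3:ℝ) ≤ (n:ℝ) := by exact_mod_cast hn3
          linarith
        have hnk0 : (0:ℝ) ≤ ((n - k : ℕ) : ℝ) := by positivity
        rw [hfac, show ((n - k : ℕ) : ℝ) * (4 * ((n - 2).factorial : ℝ) /
          ((n : ℝ) * ((n:ℝ) - 1) * ((n - 2).factorial : ℝ)))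
          = (((n - k : ℕ) : ℝ) * 4 * ((n - 2).factorial : ℝ)) /
            ((n : ℝ) * ((n:ℝ) - 1) * ((n - 2).factorial : ℝ)) by ring]
        rw [div_le_div_iff₀ (by positivity) hn0]
        nlinarith [mul_le_mul_of_nonneg_right hnk (le_of_lt hF), hn0, hn1, hF, hnk0]
end

section
/- Let n ≥ 2 be an integer. Then ∑ (p!·q!)/n! ≤ 4/n, where the sum runs over all pairs of positive integers (p, q) with p + q = n. -/
open Finset

lemma aux1_s6 (n : ℕ) : ∀ p, 2 ≤ p → 2 * p ≤ n →
    p.factorial * (n - p).factorial ≤ 2 * (n - 2).factorial := by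
  intro p
  induction p with
  | zero => omega
  | succ p ih =>
    intro h2 hpn
    rcases Nat.lt_or_ge p 2 with h | h
    · have hp1 : p = 1 := by omega
      subst hp1
      simp [Nat.factorial]
    · have ih' := ih h (by omega)
      have e : n - p = (n - (p + 1)) + 1 := by omega
      have hle : p + 1 ≤ n - p := by omega
      calc (p + 1).factorial * (n - (p + 1)).factorial
          = (p + 1) * (p.factorial * (n - (p + 1)).factorial) := by
            rw [Nat.factorial_succ]; ring
        _ ≤ (n - p) * (p.factorial * (n - (p + 1)).factorial) :=
            Nat.mul_le_mul_right _ hle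
        _ = p.factorial * (n - p).factorial := by
            rw [e, Nat.factorial_succ]; ring
        _ ≤ 2 * (n - 2).factorial := ih'

lemma aux (n p : ℕ) (h2 : 2 ≤ p) (hpn : p + 2 ≤ n) :
    p.factorial * (n - p).factorial ≤ 2 * (n - 2).factorial := by
  rcases le_or_gt (2 * p) n with h | h
  · exact aux1_s6 n p h2 h
  · have := aux1_s6 n (n - p) (by omega) (by omega)
    rw [show n - (n - p) = p by omega] at this
    rw [mul_comm]; exact this

/-- Let `n ≥ 2`. Then the sum of `p! q! / n!` over all pairs of positive
integers `(p, q)` with `p + q = n` is at most `4 / n`. -/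
theorem stmt6 (n : ℕ) (hn : 2 ≤ n) :
    ∑ pq ∈ (Finset.HasAntidiagonal.antidiagonal n).filter (fun pq => 0 < pq.1 ∧ 0 < pq.2),
      ((pq.1.factorial : ℝ) * (pq.2.factorial : ℝ)) / (n.factorial : ℝ) ≤ 4 / n := by
  have hset : (Finset.HasAntidiagonal.antidiagonal n).filter (fun pq => 0 < pq.1 ∧ 0 < pq.2)
      = (Finset.Ico 1 n).image (fun p => (p, n - p)) := by
    ext ⟨a, b⟩
    simp only [Finset.mem_filter, Finset.HasAntidiagonal.mem_antidiagonal, Finset.mem_image,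
      Finset.mem_Ico, Prod.mk.injEq]
    constructor
    · rintro ⟨hab, ha, hb⟩
      exact ⟨a, ⟨ha, by omega⟩, rfl, by omega⟩
    · rintro ⟨p, ⟨h1, h2⟩, rfl, rfl⟩
      refine ⟨by omega, by omega, by omega⟩
  rw [hset, Finset.sum_image (by intro x _ y _ h; exact (Prod.mk.injEq _ _ _ _ ▸ h).1)]
  simp only
  rcases le_or_gt n 3 with h3 | h3
  · interval_cases n
    · norm_num [show Finset.Ico 1 2 = {1} by rfl, Nat.factorial]
    · norm_num [show Finset.Ico 1 3 = {1, 2} by rfl, Nat.factorial]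
  · -- n ≥ 4
    obtain ⟨m, rfl⟩ : ∃ m, n = m + 4 := ⟨n - 4, by omega⟩
    set f : ℕ → ℝ :=
      fun p => ((p.factorial : ℝ) * ((m + 4 - p).factorial : ℝ)) / ((m + 4).factorial : ℝ)
      with hf
    rw [Finset.sum_eq_sum_Ico_succ_bot (by omega : 1 < m + 4) f]
    have htop := Finset.sum_Ico_succ_top (show 2 ≤ m + 3 by omega) f
    rw [show (m + 3) + 1 = m + 4 from rfl] at htop
    rw [htop]
    have hfac4 : ((m + 4).factorial : ℝ) = ((m : ℝ) + 4) * ((m + 3).factorial : ℝ) := by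
      rw [show m + 4 = (m + 3) + 1 from rfl, Nat.factorial_succ]; push_cast; ring
    have hfac3 : ((m + 3).factorial : ℝ) = ((m : ℝ) + 3) * ((m + 2).factorial : ℝ) := by
      rw [show m + 3 = (m + 2) + 1 from rfl, Nat.factorial_succ]; push_cast; ring
    have hp2 : (0:ℝ) < ((m + 2).factorial : ℝ) := by positivity
    have hp3 : (0:ℝ) < ((m + 3).factorial : ℝ) := by positivity
    have hf1 : f 1 = 1 / ((m : ℝ) + 4) := by
      rw [hf]
      simp only [show m + 4 - 1 = m + 3 from rfl, Nat.factorial_one, Nat.cast_one, one_mul,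
        hfac4]
      rw [div_eq_div_iff (by positivity) (by positivity)]
      ring
    have hftop : f (m + 3) = 1 / ((m : ℝ) + 4) := by
      rw [hf]
      simp only [show m + 4 - (m + 3) = 1 by omega, Nat.factorial_one, Nat.cast_one, mul_one,
        hfac4]
      rw [div_eq_div_iff (by positivity) (by positivity)]
      ring
    have hmid : ∑ p ∈ Finset.Ico 2 (m + 3), f p
        ≤ ((m : ℝ) + 1) * (2 / (((m : ℝ) + 4) * ((m : ℝ) + 3))) := by
      have hbound : ∀ p ∈ Finset.Ico 2 (m + 3), f p ≤ 2 / (((m : ℝ) + 4) * ((m : ℝ) + 3)) := by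
        intro p hp
        rw [Finset.mem_Ico] at hp
        have hkey := aux (m + 4) p hp.1 (by omega)
        rw [show m + 4 - 2 = m + 2 from rfl] at hkey
        have hnum : ((p.factorial : ℝ) * ((m + 4 - p).factorial : ℝ))
            ≤ 2 * ((m + 2).factorial : ℝ) := by exact_mod_cast hkey
        rw [hf]
        simp only
        rw [hfac4, hfac3, div_le_div_iff₀ (by positivity) (by positivity)]
        calc (p.factorial : ℝ) * ((m + 4 - p).factorial : ℝ) * (((m:ℝ) + 4) * ((m:ℝ) + 3))
            ≤ 2 * ((m + 2).factorial : ℝ) * (((m:ℝ) + 4) * ((m:ℝ) + 3)) := by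
              apply mul_le_mul_of_nonneg_right hnum; positivity
          _ = 2 * (((m:ℝ) + 4) * (((m:ℝ) + 3) * ((m + 2).factorial : ℝ))) := by ring
      calc ∑ p ∈ Finset.Ico 2 (m + 3), f p
          ≤ (Finset.Ico 2 (m + 3)).card • (2 / (((m : ℝ) + 4) * ((m : ℝ) + 3))) :=
            Finset.sum_le_card_nsmul _ _ _ hbound
        _ = ((m : ℝ) + 1) * (2 / (((m : ℝ) + 4) * ((m : ℝ) + 3))) := by
            rw [Nat.card_Ico, show m + 3 - 2 = m + 1 from rfl, nsmul_eq_mul]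
            push_cast; ring
    have hmid2 : ((m : ℝ) + 1) * (2 / (((m : ℝ) + 4) * ((m : ℝ) + 3))) ≤ 2 / ((m : ℝ) + 4) := by
      have e : ((m : ℝ) + 1) * (2 / (((m : ℝ) + 4) * ((m : ℝ) + 3)))
          = (2 * ((m:ℝ) + 1)) / (((m : ℝ) + 4) * ((m : ℝ) + 3)) := by ring
      rw [e, div_le_div_iff₀ (by positivity) (by positivity)]
      have hm0 : (0:ℝ) ≤ (m:ℝ) := Nat.cast_nonneg m
      nlinarith
    have hfin : (4 : ℝ) / ((m + 4 : ℕ) : ℝ)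
        = 1 / ((m : ℝ) + 4) + 2 / ((m : ℝ) + 4) + 1 / ((m : ℝ) + 4) := by
      push_cast; ring
    rw [hf1, hftop, hfin]
    linarith [hmid, hmid2]
end

section
/- For integers k and n with 3 ≤ k ≤ n, define F(n,k) := ∑ (n_1!⋯n_k!)/n!, where the sum runs over all tuples (n_1,…,n_k) of positive integers with n_1 + ⋯ + n_k = n. Then F(n,k) ≤ (4/n)·F(n−1, k−1). -/
open Finset


lemma fact_mul_fact_le (t : ℕ) (ht : 2 ≤ t) : ∀ a, 2 ≤ a →
    a.factorial * t.factorial ≤ 2 * (a + t - 2).factorial := by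
  intro a ha
  induction a, ha using Nat.le_induction with
  | base => simp [Nat.factorial]
  | succ a ha ih =>
    have h1 : a + 1 + t - 2 = (a + t - 2) + 1 := by omega
    rw [h1, Nat.factorial_succ, Nat.factorial_succ]
    calc (a + 1) * a.factorial * t.factorial
        = (a + 1) * (a.factorial * t.factorial) := by ring
      _ ≤ (a + t - 2 + 1) * (2 * (a + t - 2).factorial) := by
          apply Nat.mul_le_mul _ ih; omega
      _ = 2 * ((a + t - 2 + 1) * (a + t - 2).factorial) := by ring

lemma key_sum (s : ℕ) :
    ∑ a ∈ Icc 1 s, a.factorial * (s + 1 - a).factorial ≤ 4 * s.factorial := by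
  match s with
  | 0 => simp
  | 1 => decide
  | (r+2) =>
    rw [← (show insert (r + 1 + 1) (Icc 1 (r + 1)) = Icc 1 (r + 2) from
          Finset.insert_Icc_right_eq_Icc_add_one (by omega : 1 ≤ r + 1 + 1)),
        Finset.sum_insert (by simp),
        ← (show insert 1 (Icc 2 (r + 1)) = Icc 1 (r + 1) from
          Finset.insert_Icc_add_one_left_eq_Icc (by omega : 1 ≤ r + 1)),
        Finset.sum_insert (by simp)]
    have hmid : ∑ a ∈ Icc 2 (r + 1), a.factorial * (r + 2 + 1 - a).factorial ≤
        r * (2 * (r + 1).factorial) := by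
      calc ∑ a ∈ Icc 2 (r + 1), a.factorial * (r + 2 + 1 - a).factorial
          ≤ ∑ _a ∈ Icc 2 (r + 1), 2 * (r + 1).factorial := by
            apply Finset.sum_le_sum
            intro a ha
            rw [Finset.mem_Icc] at ha
            have := fact_mul_fact_le (r + 2 + 1 - a) (by omega) a ha.1
            have h2 : a + (r + 2 + 1 - a) - 2 = r + 1 := by omega
            rwa [h2] at this
        _ ≤ r * (2 * (r + 1).factorial) := by
            rw [Finset.sum_const, Nat.card_Icc, smul_eq_mul]
            apply Nat.mul_le_mul_right; omega
    have e1 : (r + 2 + 1 - (r + 1 + 1)) = 1 := by omega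
    have e2 : (r + 2 + 1 - 1) = r + 2 := by omega
    rw [e1, e2]
    have hf : (r + 2).factorial = (r + 2) * (r + 1).factorial := Nat.factorial_succ _
    simp only [Nat.factorial_one, mul_one, one_mul]
    have hr : r + 1 + 1 = r + 2 := by omega
    rw [hr, hf]
    nlinarith [Nat.factorial_pos (r+1), hmid]


lemma split_sum (n m : ℕ) (hn : 1 ≤ n) :
    ∑ f ∈ (Finset.Nat.antidiagonalTuple (m+2) n).filter (fun f => ∀ i, 1 ≤ f i),
      ∏ i, (f i).factorial
    = ∑ g ∈ (Finset.Nat.antidiagonalTuple (m+1) (n-1)).filter (fun g => ∀ i, 1 ≤ g i),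
        ∑ a ∈ Icc 1 (g 0),
          a.factorial * (g 0 + 1 - a).factorial * ∏ i : Fin m, (g i.succ).factorial := by
  rw [Finset.sum_sigma']
  refine Finset.sum_nbij'
    (fun f => ⟨Fin.cons (f 0 + f 1 - 1) (fun i : Fin m => f i.succ.succ), f 0⟩)
    (fun p => Fin.cons p.2 (Fin.cons (p.1 0 + 1 - p.2) (fun i : Fin m => p.1 i.succ)))
    ?_ ?_ ?_ ?_ ?_
  · intro f hf
    rw [Finset.mem_filter, Finset.Nat.mem_antidiagonalTuple] at hf
    obtain ⟨hsum, hpos⟩ := hf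
    rw [Fin.sum_univ_succ, Fin.sum_univ_succ] at hsum
    have h0 := hpos 0
    have h1 := hpos 1
    rw [Finset.mem_sigma, Finset.mem_filter, Finset.Nat.mem_antidiagonalTuple,
      Finset.mem_Icc]
    refine ⟨⟨?_, ?_⟩, ?_⟩
    · rw [Fin.sum_univ_succ]
      simp only [Fin.cons_zero, Fin.cons_succ]
      rw [Fin.succ_zero_eq_one] at hsum
      omega
    · intro i
      refine Fin.cases ?_ (fun j => ?_) i
      · simp only [Fin.cons_zero]; omega
      · simp only [Fin.cons_succ]; exact hpos _
    · simp only [Fin.cons_zero]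
      rw [Fin.succ_zero_eq_one] at hsum
      constructor <;> omega
  · rintro ⟨g, a⟩ hp
    rw [Finset.mem_sigma, Finset.mem_filter, Finset.Nat.mem_antidiagonalTuple,
      Finset.mem_Icc] at hp
    obtain ⟨⟨hsum, hpos⟩, ha1, ha2⟩ := hp
    dsimp only at *
    rw [Fin.sum_univ_succ] at hsum
    rw [Finset.mem_filter, Finset.Nat.mem_antidiagonalTuple]
    constructor
    · rw [Fin.sum_univ_succ, Fin.sum_univ_succ]
      simp only [Fin.cons_zero, Fin.cons_succ]
      omega
    · intro i
      refine Fin.cases ?_ (fun j => ?_) i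
      · simp only [Fin.cons_zero]; omega
      · refine Fin.cases ?_ (fun l => ?_) j
        · simp only [Fin.cons_succ, Fin.cons_zero]; omega
        · simp only [Fin.cons_succ]; exact hpos _
  · intro f hf
    rw [Finset.mem_filter] at hf
    have h0 := hf.2 0
    have h1 := hf.2 1
    funext x
    refine Fin.cases ?_ (fun j => ?_) x
    · simp
    · refine Fin.cases ?_ (fun l => ?_) j
      · simp only [Fin.cons_succ, Fin.cons_zero]
        rw [Fin.succ_zero_eq_one]
        omega
      · simp only [Fin.cons_succ]
  · rintro ⟨g, a⟩ hp
    rw [Finset.mem_sigma, Finset.mem_filter, Finset.mem_Icc] at hp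
    obtain ⟨⟨hsum, hpos⟩, ha1, ha2⟩ := hp
    dsimp only at *
    have h1 : (Fin.cons a (Fin.cons (g 0 + 1 - a) fun i : Fin m => g i.succ) : Fin (m+2) → ℕ) 1
        = g 0 + 1 - a := by
      rw [← Fin.succ_zero_eq_one, Fin.cons_succ, Fin.cons_zero]
    refine Sigma.ext ?_ ?_
    · dsimp only
      funext x
      refine Fin.cases ?_ (fun j => ?_) x
      · simp only [Fin.cons_zero, h1]
        omega
      · simp only [Fin.cons_succ]
    · dsimp only
      exact heq_of_eq (Fin.cons_zero _ _)
  · intro f hf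
    rw [Finset.mem_filter] at hf
    have h0 := hf.2 0
    have h1 := hf.2 1
    rw [Fin.prod_univ_succ, Fin.prod_univ_succ]
    simp only [Fin.cons_zero, Fin.cons_succ, Fin.succ_zero_eq_one]
    have e : f 0 + f 1 - 1 + 1 - f 0 = f 1 := by omega
    rw [e]
    ring

lemma nat_main (n m : ℕ) (hn : 1 ≤ n) :
    ∑ f ∈ (Finset.Nat.antidiagonalTuple (m+2) n).filter (fun f => ∀ i, 1 ≤ f i),
      ∏ i, (f i).factorial
    ≤ 4 * ∑ g ∈ (Finset.Nat.antidiagonalTuple (m+1) (n-1)).filter (fun g => ∀ i, 1 ≤ g i),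
        ∏ i, (g i).factorial := by
  rw [split_sum n m hn, Finset.mul_sum]
  apply Finset.sum_le_sum
  intro g hg
  rw [← Finset.sum_mul]
  calc (∑ a ∈ Icc 1 (g 0), a.factorial * (g 0 + 1 - a).factorial) *
        ∏ i : Fin m, (g i.succ).factorial
      ≤ (4 * (g 0).factorial) * ∏ i : Fin m, (g i.succ).factorial :=
        Nat.mul_le_mul_right _ (key_sum (g 0))
    _ = 4 * ∏ i, (g i).factorial := by rw [Fin.prod_univ_succ]; ring

/-- `F n k` is the sum of the reciprocals of the multinomial coefficients `n!/(n₁!⋯n_k!)`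
over all compositions `(n₁, …, n_k)` of `n` into exactly `k` positive parts. -/
noncomputable def compositionMultinomialRecipSum (n k : ℕ) : ℝ :=
  ∑ f ∈ (Finset.Nat.antidiagonalTuple k n).filter (fun f => ∀ i, 1 ≤ f i),
    (∏ i, ((f i).factorial : ℝ)) / (n.factorial : ℝ)

lemma cmrs_eq (n k : ℕ) :
    compositionMultinomialRecipSum n k =
      ((∑ f ∈ (Finset.Nat.antidiagonalTuple k n).filter (fun f => ∀ i, 1 ≤ f i),
        ∏ i, (f i).factorial : ℕ) : ℝ) / (n.factorial : ℝ) := by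
  rw [compositionMultinomialRecipSum, ← Finset.sum_div]
  push_cast
  rfl

/-- For integers `3 ≤ k ≤ n`, we have `F(n, k) ≤ (4/n) · F(n-1, k-1)`. -/
theorem stmt7 (n k : ℕ) (hk : 3 ≤ k) (hkn : k ≤ n) :
    compositionMultinomialRecipSum n k ≤
      (4 / n) * compositionMultinomialRecipSum (n - 1) (k - 1) := by
  obtain ⟨m, rfl⟩ : ∃ m, k = m + 2 := ⟨k - 2, by omega⟩
  have hk1 : m + 2 - 1 = m + 1 := by omega
  rw [cmrs_eq, cmrs_eq, hk1]
  have hn : 1 ≤ n := by omega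
  have hnpos : (0:ℝ) < n := by positivity
  have hfac : (n.factorial : ℝ) = n * (n-1).factorial := by
    rw [← Nat.mul_factorial_pred (by omega : n ≠ 0)]
    push_cast
    ring
  have hnat := nat_main n m hn
  have hnat' : ((∑ f ∈ (Finset.Nat.antidiagonalTuple (m+2) n).filter (fun f => ∀ i, 1 ≤ f i),
      ∏ i, (f i).factorial : ℕ) : ℝ)
      ≤ 4 * ((∑ g ∈ (Finset.Nat.antidiagonalTuple (m+1) (n-1)).filter (fun g => ∀ i, 1 ≤ g i),
        ∏ i, (g i).factorial : ℕ) : ℝ) := by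
    exact_mod_cast hnat
  rw [hfac, div_mul_eq_mul_div, ← mul_div_assoc, div_div,
    mul_comm ((((n-1).factorial : ℕ) : ℝ)) (n:ℝ)]
  gcongr
end

section
/- Let k and χ be integers with 2 ≤ k ≤ χ. Then ∑ x_1·x_2·⋯·x_k ≤ 4·(χ−1)!, where the sum runs over all tuples (x_1,…,x_k) of positive integers with x_1 + ⋯ + x_k = χ. -/
open Finset

/-- Sum of products over compositions of `n` into `k` positive parts. -/
def stmt8S (k n : ℕ) : ℕ :=
  ∑ f ∈ (Finset.Nat.antidiagonalTuple k n).filter (fun f => ∀ i, 1 ≤ f i), ∏ i, f i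

/-- Auxiliary bound function: `c 0 = 0`, `c (m+1) = 3^m`. -/
def stmt8c : ℕ → ℕ
  | 0 => 0
  | m + 1 => 3 ^ m

lemma stmt8S_succ (k n : ℕ) :
    stmt8S (k + 1) n = ∑ p ∈ Finset.HasAntidiagonal.antidiagonal n, p.1 * stmt8S k p.2 := by
  classical
  have h1 : ∑ p ∈ Finset.HasAntidiagonal.antidiagonal n, p.1 * stmt8S k p.2
      = ∑ p ∈ (Finset.HasAntidiagonal.antidiagonal n).filter (fun p => 1 ≤ p.1), p.1 * stmt8S k p.2 := by
    refine (Finset.sum_filter_of_ne ?_).symm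
    intro p _ hp
    exact Nat.pos_of_ne_zero fun h => hp (by simp [h])
  rw [h1]
  simp only [stmt8S, Finset.mul_sum]
  rw [Finset.sum_sigma']
  refine Finset.sum_nbij'
    (i := fun f => (⟨(f 0, ∑ i : Fin k, f i.succ), fun i => f i.succ⟩ :
      Σ _ : ℕ × ℕ, Fin k → ℕ))
    (j := fun x => Fin.cons x.1.1 x.2) ?_ ?_ ?_ ?_ ?_
  · intro f hf
    simp only [Finset.mem_filter, Finset.Nat.mem_antidiagonalTuple] at hf
    obtain ⟨hsum, hpos⟩ := hf
    simp only [Finset.mem_sigma, Finset.mem_filter, Finset.HasAntidiagonal.mem_antidiagonal,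
      Finset.Nat.mem_antidiagonalTuple]
    refine ⟨⟨?_, hpos 0⟩, trivial, fun i => hpos i.succ⟩
    rw [← hsum, Fin.sum_univ_succ]
  · intro x hx
    simp only [Finset.mem_sigma, Finset.mem_filter, Finset.HasAntidiagonal.mem_antidiagonal,
      Finset.Nat.mem_antidiagonalTuple] at hx
    obtain ⟨⟨hsum, hpos⟩, hsum2, hpos2⟩ := hx
    simp only [Finset.mem_filter, Finset.Nat.mem_antidiagonalTuple]
    constructor
    · rw [Fin.sum_cons, hsum2, hsum]
    · intro i
      refine Fin.cases ?_ ?_ i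
      · simpa using hpos
      · intro j; simpa using hpos2 j
  · intro f _
    exact Fin.cons_self_tail f
  · intro x hx
    simp only [Finset.mem_sigma, Finset.mem_filter, Finset.HasAntidiagonal.mem_antidiagonal,
      Finset.Nat.mem_antidiagonalTuple] at hx
    obtain ⟨⟨hsum, hpos⟩, hsum2, hpos2⟩ := hx
    ext i
    · simp
    · simp [hsum2]
    · simp
  · intro f _
    simp [Fin.prod_univ_succ]

lemma stmt8S_one_le (n : ℕ) : stmt8S 1 n ≤ n := by
  classical
  simp only [stmt8S, Finset.Nat.antidiagonalTuple_one]
  rw [Finset.filter_singleton]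
  split
  · simp
  · simp

lemma stmt8_n_le_c (n : ℕ) : n ≤ stmt8c n := by
  cases n with
  | zero => simp [stmt8c]
  | succ m =>
    have h1 : m < 2 ^ m := Nat.lt_two_pow_self
    have h2 : 2 ^ m ≤ 3 ^ m := Nat.pow_le_pow_left (by norm_num) m
    simpa [stmt8c] using Nat.lt_of_lt_of_le h1 h2

lemma stmt8HK (m : ℕ) :
    2 * (∑ p ∈ Finset.HasAntidiagonal.antidiagonal m, stmt8c p.2) + 1 = 3 ^ m ∧
    4 * (∑ p ∈ Finset.HasAntidiagonal.antidiagonal m, p.1 * stmt8c p.2) + 2 * m + 1 = 3 ^ m := by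
  induction m with
  | zero => simp [stmt8c]
  | succ m ih =>
    obtain ⟨ih1, ih2⟩ := ih
    rw [Finset.Nat.sum_antidiagonal_succ (f := fun p => stmt8c p.2),
      Finset.Nat.sum_antidiagonal_succ (f := fun p => p.1 * stmt8c p.2)]
    dsimp only
    have hsplit : ∑ p ∈ Finset.HasAntidiagonal.antidiagonal m, (p.1 + 1) * stmt8c p.2
        = (∑ p ∈ Finset.HasAntidiagonal.antidiagonal m, p.1 * stmt8c p.2)
          + ∑ p ∈ Finset.HasAntidiagonal.antidiagonal m, stmt8c p.2 := by
      rw [← Finset.sum_add_distrib]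
      congr 1; funext p; ring
    rw [hsplit]
    have hc : stmt8c (m + 1) = 3 ^ m := rfl
    rw [hc, pow_succ]
    omega

lemma stmt8H_le (n : ℕ) :
    ∑ p ∈ Finset.HasAntidiagonal.antidiagonal n, p.1 * stmt8c p.2 ≤ stmt8c n := by
  cases n with
  | zero => simp [stmt8c]
  | succ m =>
    have h := (stmt8HK (m + 1)).2
    have h3 : 3 ^ (m + 1) ≤ 4 * 3 ^ m := by
      rw [pow_succ]; omega
    have : 4 * (∑ p ∈ Finset.HasAntidiagonal.antidiagonal (m + 1), p.1 * stmt8c p.2) ≤ 4 * 3 ^ m := by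
      omega
    simpa [stmt8c] using Nat.le_of_mul_le_mul_left this (by norm_num)

lemma stmt8S_le_c (k : ℕ) : ∀ n, stmt8S (k + 1) n ≤ stmt8c n := by
  induction k with
  | zero => intro n; exact le_trans (stmt8S_one_le n) (stmt8_n_le_c n)
  | succ k ih =>
    intro n
    rw [stmt8S_succ]
    calc ∑ p ∈ Finset.HasAntidiagonal.antidiagonal n, p.1 * stmt8S (k + 1) p.2
        ≤ ∑ p ∈ Finset.HasAntidiagonal.antidiagonal n, p.1 * stmt8c p.2 := by
          exact Finset.sum_le_sum fun p _ => Nat.mul_le_mul_left _ (ih p.2)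
      _ ≤ stmt8c n := stmt8H_le n

lemma stmt8E (m : ℕ) : 3 ^ (m + 2) + m ≤ 16 * (m + 1).factorial := by
  induction m with
  | zero => norm_num
  | succ m ih =>
    rcases Nat.lt_or_ge m 2 with hm | hm
    · interval_cases m <;> simp [Nat.factorial] <;> norm_num
    · have hfac : 1 ≤ (m + 1).factorial := Nat.one_le_iff_ne_zero.mpr (Nat.factorial_ne_zero _)
      have hstep : (m + 2).factorial = (m + 2) * (m + 1).factorial := rfl
      have h1 : 3 ^ (m + 1 + 2) + (m + 1) ≤ 3 * (3 ^ (m + 2) + m) + 1 := by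
        rw [pow_succ]; ring_nf; omega
      have h2 : 3 * (3 ^ (m + 2) + m) + 1 ≤ 48 * (m + 1).factorial + 1 := by omega
      have h3 : 48 * (m + 1).factorial + 1 ≤ 16 * (m + 2) * (m + 1).factorial := by
        nlinarith
      calc 3 ^ (m + 1 + 2) + (m + 1) ≤ 48 * (m + 1).factorial + 1 := le_trans h1 h2
        _ ≤ 16 * (m + 2) * (m + 1).factorial := h3
        _ = 16 * (m + 2).factorial := by rw [hstep]; ring

lemma stmt8_nat (k χ : ℕ) (hk : 2 ≤ k) (hkχ : k ≤ χ) :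
    stmt8S k χ ≤ 4 * (χ - 1).factorial := by
  obtain ⟨j, rfl⟩ : ∃ j, k = j + 2 := ⟨k - 2, by omega⟩
  obtain ⟨m, rfl⟩ : ∃ m, χ = m + 2 := ⟨χ - 2, by omega⟩
  have h1 : stmt8S (j + 2) (m + 2)
      ≤ ∑ p ∈ Finset.HasAntidiagonal.antidiagonal (m + 2), p.1 * stmt8c p.2 := by
    rw [stmt8S_succ]
    exact Finset.sum_le_sum fun p _ => Nat.mul_le_mul_left _ (stmt8S_le_c j p.2)
  have h2 := (stmt8HK (m + 2)).2
  have h3 := stmt8E m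
  have h4 : (m + 2 - 1).factorial = (m + 1).factorial := rfl
  have h5 : 4 * (∑ p ∈ Finset.HasAntidiagonal.antidiagonal (m + 2), p.1 * stmt8c p.2)
      ≤ 4 * (4 * (m + 1).factorial) := by omega
  have h6 := Nat.le_of_mul_le_mul_left h5 (by norm_num : 0 < 4)
  rw [h4]
  omega

/-- Let `2 ≤ k ≤ χ`. Then the sum of `x₁ x₂ ⋯ x_k` over all tuples
`(x₁, …, x_k)` of positive integers with `x₁ + ⋯ + x_k = χ` is at most `4 · (χ − 1)!`. -/
theorem stmt8 (k χ : ℕ) (hk : 2 ≤ k) (hkχ : k ≤ χ) :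
    ∑ f ∈ (Finset.Nat.antidiagonalTuple k χ).filter (fun f => ∀ i, 1 ≤ f i),
      (∏ i, (f i : ℝ)) ≤ 4 * ((χ - 1).factorial : ℝ) := by
  have hcast : (∑ f ∈ (Finset.Nat.antidiagonalTuple k χ).filter (fun f => ∀ i, 1 ≤ f i),
      (∏ i, (f i : ℝ))) = ((stmt8S k χ : ℕ) : ℝ) := by
    rw [stmt8S]
    push_cast
    rfl
  rw [hcast]
  have := stmt8_nat k χ hk hkχ
  calc ((stmt8S k χ : ℕ) : ℝ) ≤ ((4 * (χ - 1).factorial : ℕ) : ℝ) := by exact_mod_cast this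
    _ = 4 * ((χ - 1).factorial : ℝ) := by push_cast; ring
end

section
/- Fix integers n ≥ 1 and m ≥ 0, a real μ > 0, and a compact set K ⊂ ℝ_{>0}^m. Let L(g) = (L_1(g),…,L_n(g)) ∈ ℝ_{>0}^n satisfy the boundary scaling assumption, and set ρ_g := (6g−6+3n)/|L(g)|. Then there exist C > 0 and g_0 such that for all g ≥ g_0 and all ℓ = (ℓ_1,…,ℓ_m) ∈ K: | ∑_{i=1}^n ( (L_i(g)ρ_g)²/sinh²(L_i(g)ρ_g) − L_i(g)ρ_g·coth(L_i(g)ρ_g) ) + ∑_{j=1}^m ( (ℓ_jρ_g)²/sinh²(ℓ_jρ_g) − ℓ_jρ_g·coth(ℓ_jρ_g) ) + 6g | ≤ C. -/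
open Filter Finset

lemma key_bound (u : ℝ) (hu : 0 < u) :
    |u ^ 2 / Real.sinh u ^ 2 - u * (Real.cosh u / Real.sinh u) + u| ≤ 1 := by
  have hs : 0 < Real.sinh u := Real.sinh_pos_iff.2 hu
  have hus : u < Real.sinh u := Real.self_lt_sinh_iff.2 hu
  have ha1 : u ^ 2 / Real.sinh u ^ 2 ≤ 1 := by
    rw [div_le_one (by positivity)]; nlinarith
  have ha0 : 0 ≤ u ^ 2 / Real.sinh u ^ 2 := by positivity
  have hcs : Real.cosh u - Real.sinh u = Real.exp (-u) := Real.cosh_sub_sinh u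
  have he : Real.exp (-u) ≤ 1 := Real.exp_le_one_iff.2 (by linarith)
  have hep : 0 < Real.exp (-u) := Real.exp_pos _
  have hb : u * (Real.cosh u / Real.sinh u) - u = u * Real.exp (-u) / Real.sinh u := by
    field_simp; linear_combination hcs
  have hb0 : 0 ≤ u * Real.exp (-u) / Real.sinh u := by positivity
  have hb1 : u * Real.exp (-u) / Real.sinh u ≤ 1 := by
    rw [div_le_one hs]; nlinarith
  rw [abs_le]
  constructor <;> nlinarith [hb]

/-- Second derivative estimate at the saddle point: under the boundary
scaling assumption `|L(g)|/(12μg) → 1`, with `ρ_g = (6g−6+3n)/|L(g)|`, the quantity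
`∑ᵢ ((Lᵢρ)²/sinh²(Lᵢρ) − Lᵢρ coth(Lᵢρ)) + ∑ⱼ ((ℓⱼρ)²/sinh²(ℓⱼρ) − ℓⱼρ coth(ℓⱼρ))`
equals `−6g + O(1)` uniformly for `ℓ` in the compact set `K ⊂ ℝ_{>0}^m`. -/
theorem stmt11 (n m : ℕ) (hn : 1 ≤ n) (μ : ℝ) (hμ : 0 < μ)
    (K : Set (Fin m → ℝ)) (hK : IsCompact K) (hKpos : ∀ ℓ ∈ K, ∀ j, 0 < ℓ j)
    (L : ℕ → Fin n → ℝ) (hL : ∀ g i, 0 < L g i)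
    (hscale : Tendsto (fun g : ℕ => (∑ i, L g i) / (12 * μ * g)) atTop (nhds 1))
    (ρ : ℕ → ℝ) (hρ : ∀ g, ρ g = ((6 * g + 3 * n - 6 : ℕ) : ℝ) / (∑ i, L g i)) :
    ∃ C > 0, ∃ g₀ : ℕ, ∀ g ≥ g₀, ∀ ℓ ∈ K,
      |(∑ i, ((L g i * ρ g) ^ 2 / Real.sinh (L g i * ρ g) ^ 2 -
            L g i * ρ g * (Real.cosh (L g i * ρ g) / Real.sinh (L g i * ρ g)))) +
        (∑ j, ((ℓ j * ρ g) ^ 2 / Real.sinh (ℓ j * ρ g) ^ 2 -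
            ℓ j * ρ g * (Real.cosh (ℓ j * ρ g) / Real.sinh (ℓ j * ρ g)))) +
        6 * (g : ℝ)| ≤ C := by
  obtain ⟨M0, hM0⟩ := hK.isBounded.exists_norm_le
  set M : ℝ := max M0 0 with hMdef
  have hMnn : 0 ≤ M := le_max_right _ _
  have hMK : ∀ ℓ ∈ K, ∀ j, ℓ j ≤ M := by
    intro ℓ hℓ j
    have h1 : ℓ j ≤ |ℓ j| := le_abs_self _
    have h2 : |ℓ j| ≤ ‖ℓ‖ := by
      have := norm_le_pi_norm ℓ j
      rwa [Real.norm_eq_abs] at this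
    exact h1.trans (h2.trans ((hM0 ℓ hℓ).trans (le_max_left _ _)))
  set R : ℝ := (2 + n) / (2 * μ) with hRdef
  have hRnn : 0 ≤ R := by positivity
  -- eventual lower bound on the sum of boundary lengths
  have hev : ∀ᶠ g in atTop, (∑ i, L g i) / (12 * μ * g) > 1 / 2 :=
    hscale.eventually (eventually_gt_nhds (by norm_num : (1 / 2 : ℝ) < 1))
  obtain ⟨g₁, hg₁⟩ := eventually_atTop.mp hev
  refine ⟨n + m * (1 + M * R) + 3 * n + 6, by positivity, max g₁ 1, ?_⟩
  intro g hg ℓ hℓ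
  have hg1 : 1 ≤ g := le_trans (le_max_right _ _) hg
  have hgg1 : g₁ ≤ g := le_trans (le_max_left _ _) hg
  have hgR : (1 : ℝ) ≤ g := by exact_mod_cast hg1
  have hSL : 0 < ∑ i, L g i := Finset.sum_pos (fun i _ => hL g i) (by
    simpa using Finset.univ_nonempty_iff.2 (Fin.pos_iff_nonempty.mp (by omega)))
  have hSL6 : 6 * μ * g < ∑ i, L g i := by
    have h := hg₁ g hgg1
    have h12 : 0 < 12 * μ * g := by positivity
    rw [gt_iff_lt, lt_div_iff₀ h12] at h
    nlinarith
  -- the cast of the numerator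
  have hNcast : ((6 * g + 3 * n - 6 : ℕ) : ℝ) = 6 * g + 3 * n - 6 := by
    have : 6 ≤ 6 * g + 3 * n := by omega
    push_cast [Nat.cast_sub this]
    ring
  set N : ℝ := 6 * (g : ℝ) + 3 * n - 6 with hNdef
  have hNpos : 0 < N := by
    have hn1 : (1 : ℝ) ≤ n := by exact_mod_cast hn
    rw [hNdef]; nlinarith
  have hρg : ρ g = N / (∑ i, L g i) := by rw [hρ g, hNcast]
  have hρpos : 0 < ρ g := by rw [hρg]; positivity
  have hρle : ρ g ≤ R := by
    rw [hρg, hRdef]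
    have hn1 : (1 : ℝ) ≤ n := by exact_mod_cast hn
    have hN2 : N ≤ (2 + n) * 3 * g := by rw [hNdef]; nlinarith
    have h6 : (0:ℝ) < 6 * μ * g := by positivity
    calc N / (∑ i, L g i) ≤ N / (6 * μ * g) := by
          gcongr
      _ ≤ ((2 + n) * 3 * g) / (6 * μ * g) := by gcongr
      _ = (2 + n) / (2 * μ) := by
          rw [div_eq_div_iff h6.ne' (by positivity)]
          ring
  -- first sum estimate
  have hsum1 : |(∑ i, ((L g i * ρ g) ^ 2 / Real.sinh (L g i * ρ g) ^ 2 -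
        L g i * ρ g * (Real.cosh (L g i * ρ g) / Real.sinh (L g i * ρ g)))) + N| ≤ n := by
    have hS : (∑ i, L g i * ρ g) = N := by
      rw [← Finset.sum_mul, hρg, mul_div_cancel₀ _ hSL.ne']
    calc |(∑ i, ((L g i * ρ g) ^ 2 / Real.sinh (L g i * ρ g) ^ 2 -
            L g i * ρ g * (Real.cosh (L g i * ρ g) / Real.sinh (L g i * ρ g)))) + N|
        = |∑ i, ((L g i * ρ g) ^ 2 / Real.sinh (L g i * ρ g) ^ 2 -
            L g i * ρ g * (Real.cosh (L g i * ρ g) / Real.sinh (L g i * ρ g)) +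
            L g i * ρ g)| := by
          rw [Finset.sum_add_distrib, hS]
      _ ≤ ∑ i : Fin n, |(L g i * ρ g) ^ 2 / Real.sinh (L g i * ρ g) ^ 2 -
            L g i * ρ g * (Real.cosh (L g i * ρ g) / Real.sinh (L g i * ρ g)) +
            L g i * ρ g| := Finset.abs_sum_le_sum_abs _ _
      _ ≤ ∑ _i : Fin n, (1 : ℝ) := Finset.sum_le_sum fun i _ =>
            key_bound _ (mul_pos (hL g i) hρpos)
      _ = n := by simp
  -- second sum estimate
  have hsum2 : |∑ j, ((ℓ j * ρ g) ^ 2 / Real.sinh (ℓ j * ρ g) ^ 2 -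
        ℓ j * ρ g * (Real.cosh (ℓ j * ρ g) / Real.sinh (ℓ j * ρ g)))| ≤ m * (1 + M * R) := by
    calc |∑ j, ((ℓ j * ρ g) ^ 2 / Real.sinh (ℓ j * ρ g) ^ 2 -
            ℓ j * ρ g * (Real.cosh (ℓ j * ρ g) / Real.sinh (ℓ j * ρ g)))|
        ≤ ∑ j : Fin m, |(ℓ j * ρ g) ^ 2 / Real.sinh (ℓ j * ρ g) ^ 2 -
            ℓ j * ρ g * (Real.cosh (ℓ j * ρ g) / Real.sinh (ℓ j * ρ g))| :=
          Finset.abs_sum_le_sum_abs _ _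
      _ ≤ ∑ _j : Fin m, (1 + M * R) := by
          apply Finset.sum_le_sum
          intro j _
          have hu : 0 < ℓ j * ρ g := mul_pos (hKpos ℓ hℓ j) hρpos
          have h1 := key_bound _ hu
          have h2 : ℓ j * ρ g ≤ M * R :=
            mul_le_mul (hMK ℓ hℓ j) hρle hρpos.le hMnn
          calc |(ℓ j * ρ g) ^ 2 / Real.sinh (ℓ j * ρ g) ^ 2 -
                ℓ j * ρ g * (Real.cosh (ℓ j * ρ g) / Real.sinh (ℓ j * ρ g))|
              ≤ |(ℓ j * ρ g) ^ 2 / Real.sinh (ℓ j * ρ g) ^ 2 -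
                ℓ j * ρ g * (Real.cosh (ℓ j * ρ g) / Real.sinh (ℓ j * ρ g)) +
                ℓ j * ρ g| + |ℓ j * ρ g| := by
                  have habs := abs_sub
                    ((ℓ j * ρ g) ^ 2 / Real.sinh (ℓ j * ρ g) ^ 2 -
                      ℓ j * ρ g * (Real.cosh (ℓ j * ρ g) / Real.sinh (ℓ j * ρ g)) +
                      ℓ j * ρ g) (ℓ j * ρ g)
                  calc |(ℓ j * ρ g) ^ 2 / Real.sinh (ℓ j * ρ g) ^ 2 -
                      ℓ j * ρ g * (Real.cosh (ℓ j * ρ g) / Real.sinh (ℓ j * ρ g))|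
                      = |((ℓ j * ρ g) ^ 2 / Real.sinh (ℓ j * ρ g) ^ 2 -
                        ℓ j * ρ g * (Real.cosh (ℓ j * ρ g) / Real.sinh (ℓ j * ρ g)) +
                        ℓ j * ρ g) - ℓ j * ρ g| := by ring_nf
                    _ ≤ _ := habs
            _ ≤ 1 + M * R := by
                have : |ℓ j * ρ g| = ℓ j * ρ g := abs_of_pos hu
                linarith [h1, this ▸ h2]
      _ = m * (1 + M * R) := by rw [Finset.sum_const]; simp; ring
  -- combine
  set A := ∑ i, ((L g i * ρ g) ^ 2 / Real.sinh (L g i * ρ g) ^ 2 -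
      L g i * ρ g * (Real.cosh (L g i * ρ g) / Real.sinh (L g i * ρ g))) with hA
  set B := ∑ j, ((ℓ j * ρ g) ^ 2 / Real.sinh (ℓ j * ρ g) ^ 2 -
      ℓ j * ρ g * (Real.cosh (ℓ j * ρ g) / Real.sinh (ℓ j * ρ g))) with hB
  have h6g : 6 * (g : ℝ) = N + (6 - 3 * n) := by rw [hNdef]; ring
  have hn0 : (0:ℝ) ≤ n := Nat.cast_nonneg n
  have hAB : A + B + 6 * (g : ℝ) = (A + N) + B + ((6 : ℝ) - 3 * n) := by rw [h6g]; ring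
  calc |A + B + 6 * (g : ℝ)| = |(A + N) + B + ((6 : ℝ) - 3 * n)| := by rw [hAB]
    _ ≤ |(A + N) + B| + |(6 : ℝ) - 3 * n| := abs_add_le _ _
    _ ≤ (|A + N| + |B|) + |(6 : ℝ) - 3 * n| := by linarith [abs_add_le (A + N) B]
    _ ≤ (n + m * (1 + M * R)) + (3 * n + 6) := by
        have h63 : |(6 : ℝ) - 3 * n| ≤ 3 * n + 6 := by
          rw [abs_le]; constructor <;> nlinarith
        linarith
    _ = n + m * (1 + M * R) + 3 * n + 6 := by ring
end

section
/- Fix integers n ≥ 1 and m ≥ 0, a real μ > 0, and a compact set K ⊂ ℝ_{>0}^m. Let L(g) = (L_1(g),…,L_n(g)) ∈ ℝ_{>0}^n satisfy the boundary scaling assumption, and set ρ_g := (6g−6+3n)/|L(g)|. Then there exist C > 0 and g_0 such that for all g ≥ g_0 and all ℓ = (ℓ_1,…,ℓ_m) ∈ K: | ∑_{i=1}^n ( 3(L_iρ_g)²/sinh²(L_iρ_g) − 2(L_iρ_g)³·coth(L_iρ_g)/sinh²(L_iρ_g) − L_iρ_g·coth(L_iρ_g) ) + ∑_{j=1}^m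 ( 3(ℓ_jρ_g)²/sinh²(ℓ_jρ_g) − 2(ℓ_jρ_g)³·coth(ℓ_jρ_g)/sinh²(ℓ_jρ_g) − ℓ_jρ_g·coth(ℓ_jρ_g) ) + 6g | ≤ C, where L_i abbreviates L_i(g). -/
open Filter Finset

noncomputable def Fterm (t : ℝ) : ℝ :=
  3 * t ^ 2 / Real.sinh t ^ 2 -
    2 * t ^ 3 * (Real.cosh t / Real.sinh t) / Real.sinh t ^ 2 -
    t * (Real.cosh t / Real.sinh t)

lemma Fterm_def (t : ℝ) :
    3 * t ^ 2 / Real.sinh t ^ 2 -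
      2 * t ^ 3 * (Real.cosh t / Real.sinh t) / Real.sinh t ^ 2 -
      t * (Real.cosh t / Real.sinh t) = Fterm t := rfl

lemma Gbound (x : ℝ) (hx : 0 < x) : |Fterm x + x| ≤ 8 := by
  rw [Fterm]
  have hs : 0 < Real.sinh x := Real.sinh_pos_iff.mpr hx
  have hxs : x < Real.sinh x := Real.self_lt_sinh_iff.mpr hx
  set c := Real.cosh (x / 2) with hcdef
  have hc : 1 ≤ c := Real.one_le_cosh _
  have hsx2 : x / 2 < Real.sinh (x / 2) := Real.self_lt_sinh_iff.mpr (by linarith)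
  have hsinh2 : Real.sinh x = 2 * Real.sinh (x / 2) * c := by
    rw [hcdef, ← Real.sinh_two_mul, mul_div_cancel₀ _ (two_ne_zero)]
  have hcosh2 : Real.cosh x = 2 * c ^ 2 - 1 := by
    have h1 : Real.cosh (x / 2) ^ 2 - Real.sinh (x / 2) ^ 2 = 1 := Real.cosh_sq_sub_sinh_sq _
    have h2 : Real.cosh x = Real.cosh (x / 2) ^ 2 + Real.sinh (x / 2) ^ 2 := by
      rw [← Real.cosh_two_mul, mul_div_cancel₀ _ (two_ne_zero)]
    rw [h2, hcdef]; linarith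
  have hsge : x * c ≤ Real.sinh x := by rw [hsinh2]; nlinarith
  have hc1 : 1 ≤ Real.cosh x := Real.one_le_cosh x
  have hA0 : 0 ≤ 3 * x ^ 2 / Real.sinh x ^ 2 := by positivity
  have hA3 : 3 * x ^ 2 / Real.sinh x ^ 2 ≤ 3 := by
    rw [div_le_iff₀ (by positivity)]; nlinarith
  have hB0 : 0 ≤ 2 * x ^ 3 * (Real.cosh x / Real.sinh x) / Real.sinh x ^ 2 := by positivity
  have hB4 : 2 * x ^ 3 * (Real.cosh x / Real.sinh x) / Real.sinh x ^ 2 ≤ 4 := by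
    have hxc : (x * c) ^ 3 ≤ Real.sinh x ^ 3 :=
      pow_le_pow_left₀ (by positivity) hsge 3
    rw [mul_div_assoc, div_div, ← mul_div_assoc, div_le_iff₀ (by positivity)]
    nlinarith [hxc, hcosh2, mul_pos hx (lt_of_lt_of_le one_pos hc),
      pow_pos hx 3, sq_nonneg c, mul_nonneg (mul_nonneg hx.le hx.le) hx.le,
      mul_le_mul_of_nonneg_left (mul_le_mul_of_nonneg_left hc (by positivity : (0:ℝ) ≤ c))
        (by positivity : (0:ℝ) ≤ x ^ 3)]
  have hD0 : x ≤ x * (Real.cosh x / Real.sinh x) := by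
    have : Real.sinh x ≤ Real.cosh x := by
      have := Real.cosh_sub_sinh x
      nlinarith [Real.exp_pos (-x)]
    have hq : 1 ≤ Real.cosh x / Real.sinh x := (one_le_div hs).mpr this
    nlinarith
  have hD1 : x * (Real.cosh x / Real.sinh x) ≤ x + 1 := by
    have hexp : Real.cosh x - Real.sinh x = Real.exp (-x) := Real.cosh_sub_sinh x
    have hexp1 : Real.exp (-x) ≤ 1 := Real.exp_le_one_iff.mpr (by linarith)
    rw [mul_div_assoc', div_le_iff₀ hs]
    nlinarith
  rw [abs_le]
  constructor <;> nlinarith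

/-- Third derivative estimate at the saddle point: under the boundary
scaling assumption `|L(g)|/(12μg) → 1`, with `ρ_g = (6g−6+3n)/|L(g)|`, the quantity
`∑ᵢ (3(Lᵢρ)²/sinh²(Lᵢρ) − 2(Lᵢρ)³ coth(Lᵢρ)/sinh²(Lᵢρ) − Lᵢρ coth(Lᵢρ)) + (same for ℓⱼ)`
equals `−6g + O(1)` uniformly for `ℓ` in the compact set `K ⊂ ℝ_{>0}^m`. -/
theorem stmt12 (n m : ℕ) (hn : 1 ≤ n) (μ : ℝ) (hμ : 0 < μ)
    (K : Set (Fin m → ℝ)) (hK : IsCompact K) (hKpos : ∀ ℓ ∈ K, ∀ j, 0 < ℓ j)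
    (L : ℕ → Fin n → ℝ) (hL : ∀ g i, 0 < L g i)
    (hscale : Tendsto (fun g : ℕ => (∑ i, L g i) / (12 * μ * g)) atTop (nhds 1))
    (ρ : ℕ → ℝ) (hρ : ∀ g, ρ g = ((6 * g + 3 * n - 6 : ℕ) : ℝ) / (∑ i, L g i)) :
    ∃ C > 0, ∃ g₀ : ℕ, ∀ g ≥ g₀, ∀ ℓ ∈ K,
      |(∑ i, (3 * (L g i * ρ g) ^ 2 / Real.sinh (L g i * ρ g) ^ 2 -
            2 * (L g i * ρ g) ^ 3 *
              (Real.cosh (L g i * ρ g) / Real.sinh (L g i * ρ g)) /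
              Real.sinh (L g i * ρ g) ^ 2 -
            L g i * ρ g * (Real.cosh (L g i * ρ g) / Real.sinh (L g i * ρ g)))) +
        (∑ j, (3 * (ℓ j * ρ g) ^ 2 / Real.sinh (ℓ j * ρ g) ^ 2 -
            2 * (ℓ j * ρ g) ^ 3 *
              (Real.cosh (ℓ j * ρ g) / Real.sinh (ℓ j * ρ g)) /
              Real.sinh (ℓ j * ρ g) ^ 2 -
            ℓ j * ρ g * (Real.cosh (ℓ j * ρ g) / Real.sinh (ℓ j * ρ g)))) +
        6 * (g : ℝ)| ≤ C := by
  -- bound on K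
  obtain ⟨M, hM⟩ := hK.isBounded.exists_norm_le
  set M' : ℝ := max M 1 with hM'def
  have hM'1 : 1 ≤ M' := le_max_right _ _
  have hℓle : ∀ ℓ ∈ K, ∀ j, ℓ j ≤ M' := by
    intro ℓ hℓ j
    calc ℓ j ≤ |ℓ j| := le_abs_self _
      _ ≤ ‖ℓ‖ := by rw [← Real.norm_eq_abs]; exact norm_le_pi_norm ℓ j
      _ ≤ M := hM ℓ hℓ
      _ ≤ M' := le_max_left _ _
  -- eventual lower bound on ∑ L
  have hev : ∀ᶠ g in atTop, (1 / 2 : ℝ) < (∑ i, L g i) / (12 * μ * g) :=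
    hscale.eventually (eventually_gt_nhds (by norm_num))
  obtain ⟨N, hN⟩ := eventually_atTop.mp hev
  set R : ℝ := 3 / (2 * μ) with hRdef
  have hRpos : 0 < R := by positivity
  refine ⟨8 * n + 8 * m + m * (M' * R) + 3 * n + 7, by positivity, max (max N n) 1, ?_⟩
  intro g hg ℓ hℓK
  have hg1 : 1 ≤ g := le_trans (le_max_right _ _) hg
  have hgn : n ≤ g := le_trans (le_max_of_le_left (le_max_right _ _)) hg
  have hgN : N ≤ g := le_trans (le_max_of_le_left (le_max_left _ _)) hg
  have hgR : (1 : ℝ) ≤ g := by exact_mod_cast hg1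
  have hnR : (1 : ℝ) ≤ n := by exact_mod_cast hn
  have hngR : (n : ℝ) ≤ g := by exact_mod_cast hgn
  have hLsum : 0 < ∑ i, L g i := by
    have : Nonempty (Fin n) := ⟨⟨0, hn⟩⟩
    exact Finset.sum_pos (fun i _ => hL g i) Finset.univ_nonempty
  have h12 : (0 : ℝ) < 12 * μ * g := by positivity
  have hLlow : 6 * μ * g ≤ ∑ i, L g i := by
    have := hN g hgN
    rw [lt_div_iff₀ h12] at this
    · linarith
  have hcast : ((6 * g + 3 * n - 6 : ℕ) : ℝ) = 6 * g + 3 * n - 6 := by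
    have h6 : 6 ≤ 6 * g + 3 * n := by omega
    push_cast [Nat.cast_sub h6]; ring
  have hρpos : 0 < ρ g := by
    rw [hρ, hcast]
    apply div_pos (by linarith) hLsum
  have hρR : ρ g ≤ R := by
    rw [hρ, hcast, hRdef]
    rw [div_le_div_iff₀ hLsum (by positivity)]
    nlinarith
  have hLρ : (∑ i, L g i) * ρ g = 6 * g + 3 * n - 6 := by
    rw [hρ, hcast, mul_div_cancel₀ _ (ne_of_gt hLsum)]
  simp only [Fterm_def]
  -- decompose sums
  have e1 : ∑ i, Fterm (L g i * ρ g)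
      = (∑ i, (Fterm (L g i * ρ g) + L g i * ρ g)) - (∑ i, L g i) * ρ g := by
    rw [Finset.sum_add_distrib, ← Finset.sum_mul]; ring
  have e2 : ∑ j, Fterm (ℓ j * ρ g)
      = (∑ j, (Fterm (ℓ j * ρ g) + ℓ j * ρ g)) - (∑ j, ℓ j * ρ g) := by
    rw [Finset.sum_add_distrib]; ring
  have hS1 : |∑ i, (Fterm (L g i * ρ g) + L g i * ρ g)| ≤ 8 * n := by
    calc |∑ i, (Fterm (L g i * ρ g) + L g i * ρ g)|
        ≤ ∑ i, |Fterm (L g i * ρ g) + L g i * ρ g| := Finset.abs_sum_le_sum_abs _ _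
      _ ≤ ∑ _i : Fin n, (8 : ℝ) :=
          Finset.sum_le_sum (fun i _ => Gbound _ (mul_pos (hL g i) hρpos))
      _ = 8 * n := by simp [mul_comm]
  have hS2 : |∑ j, (Fterm (ℓ j * ρ g) + ℓ j * ρ g)| ≤ 8 * m := by
    calc |∑ j, (Fterm (ℓ j * ρ g) + ℓ j * ρ g)|
        ≤ ∑ j, |Fterm (ℓ j * ρ g) + ℓ j * ρ g| := Finset.abs_sum_le_sum_abs _ _
      _ ≤ ∑ _j : Fin m, (8 : ℝ) :=
          Finset.sum_le_sum (fun j _ => Gbound _ (mul_pos (hKpos ℓ hℓK j) hρpos))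
      _ = 8 * m := by simp [mul_comm]
  have hS3lo : 0 ≤ ∑ j, ℓ j * ρ g :=
    Finset.sum_nonneg fun j _ => le_of_lt (mul_pos (hKpos ℓ hℓK j) hρpos)
  have hS3hi : ∑ j, ℓ j * ρ g ≤ m * (M' * R) := by
    calc ∑ j, ℓ j * ρ g ≤ ∑ _j : Fin m, M' * R := by
          apply Finset.sum_le_sum
          intro j _
          exact mul_le_mul (hℓle ℓ hℓK j) hρR hρpos.le (by linarith)
      _ = m * (M' * R) := by simp [mul_comm]
  rw [e1, e2, hLρ]
  rw [abs_le]
  rw [abs_le] at hS1 hS2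
  constructor <;> nlinarith [hS1.1, hS1.2, hS2.1, hS2.2, mul_nonneg (Nat.cast_nonneg (α := ℝ) m) (mul_nonneg (by linarith : (0:ℝ) ≤ M') hRpos.le)]
end

section
/- Fix integers n ≥ 1 and m ≥ 0, a real μ > 0, and a compact set K ⊂ ℝ_{>0}^m. Let L(g) = (L_1(g),…,L_n(g)) ∈ ℝ_{>0}^n satisfy the boundary scaling assumption, and set ρ_g := (6g−6+3n)/|L(g)|. Then there exist c > 0, C > 0 and g_0 such that for all g ≥ g_0, all ℓ = (ℓ_1,…,ℓ_m) ∈ K, and all real θ with g^{−2/5} ≤ |θ| ≤ π/2: ∏_{i=1}^n |sinh(L_i(g)·ρ_g·e^{iθ})| · ∏_{j=1}^m |sinh(ℓ_j·ρ_g·e^{iθ})| ≤ C·e^{−c·g^{1/5}} · ∏_{i=1}^n sinh(L_i(g)·ρ_g) · ∏_{j=1}^m sinh(ℓ_j·ρ_g). -/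
open Filter Finset

lemma aux_sq_abs_sinh (x y : ℝ) :
    (‖Complex.sinh ((x:ℂ) + (y:ℂ) * Complex.I)‖)^2
      = Real.sinh x ^ 2 + Real.sin y ^ 2 := by
  rw [Complex.sinh_add, Complex.sinh_mul_I, Complex.cosh_mul_I]
  rw [Complex.sq_norm]
  have : Complex.sinh x * Complex.cos y + Complex.cosh x * (Complex.sin y * Complex.I)
      = ((Real.sinh x * Real.cos y : ℝ) : ℂ) + ((Real.cosh x * Real.sin y : ℝ) : ℂ) * Complex.I := by
    push_cast [Complex.ofReal_sinh, Complex.ofReal_cosh, Complex.ofReal_sin, Complex.ofReal_cos]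
    ring
  rw [this, Complex.normSq_add_mul_I]
  have h1 := Real.sin_sq_add_cos_sq y
  have h2 := Real.cosh_sq_sub_sinh_sq x
  nlinarith

lemma aux_sinh_diff {a b : ℝ} (hb : 0 ≤ b) (hab : b ≤ a) :
    a - b ≤ Real.sinh a - Real.sinh b := by
  have h : Real.sinh a = Real.sinh b * Real.cosh (a - b) + Real.cosh b * Real.sinh (a - b) := by
    rw [← Real.sinh_add]; ring_nf
  have h1 : (1:ℝ) ≤ Real.cosh (a - b) := Real.one_le_cosh _
  have h2 : (1:ℝ) ≤ Real.cosh b := Real.one_le_cosh _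
  have h3 : a - b ≤ Real.sinh (a - b) := Real.self_le_sinh_iff.2 (by linarith)
  have h4 : 0 ≤ Real.sinh b := Real.sinh_nonneg_iff.2 hb
  have h5 : 0 ≤ Real.sinh (a - b) := Real.sinh_nonneg_iff.2 (by linarith)
  nlinarith

lemma aux_abs_sinh_le {r θ : ℝ} (hr : 0 ≤ r) (hθ : |θ| ≤ Real.pi / 2) :
    ‖Complex.sinh ((r:ℂ) * Complex.exp (θ * Complex.I))‖ ≤ Real.sinh r := by
  have hc : 0 ≤ Real.cos θ := by
    apply Real.cos_nonneg_of_mem_Icc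
    constructor <;> [linarith [neg_abs_le θ]; linarith [le_abs_self θ]]
  have hexp : (r:ℂ) * Complex.exp (θ * Complex.I)
      = ((r * Real.cos θ : ℝ):ℂ) + ((r * Real.sin θ : ℝ):ℂ) * Complex.I := by
    rw [Complex.exp_mul_I]
    push_cast [Complex.ofReal_sin, Complex.ofReal_cos]
    ring
  rw [hexp]
  have hsq := aux_sq_abs_sinh (r * Real.cos θ) (r * Real.sin θ)
  have hsin : Real.sin (r * Real.sin θ) ^ 2 ≤ (r * Real.sin θ)^2 := Real.sin_sq_le_sq
  have hc1 : Real.cos θ ≤ 1 := Real.cos_le_one θ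
  have hrc : 0 ≤ r * Real.cos θ := mul_nonneg hr hc
  have hrcr : r * Real.cos θ ≤ r := by nlinarith
  have hd := aux_sinh_diff hrc hrcr
  have hs1 : r * Real.cos θ ≤ Real.sinh (r * Real.cos θ) := Real.self_le_sinh_iff.2 hrc
  have hs2 : r ≤ Real.sinh r := Real.self_le_sinh_iff.2 hr
  have hpyth := Real.sin_sq_add_cos_sq θ
  have hprod : (r - r * Real.cos θ) * (r + r * Real.cos θ)
      ≤ (Real.sinh r - Real.sinh (r * Real.cos θ)) * (Real.sinh r + Real.sinh (r * Real.cos θ)) :=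
    mul_le_mul hd (by linarith) (by linarith) (by linarith)
  have key : Real.sinh (r * Real.cos θ) ^ 2 + Real.sin (r * Real.sin θ) ^ 2
      ≤ Real.sinh r ^ 2 := by nlinarith [sq_nonneg r, sq_nonneg (Real.sin θ)]
  have habs : 0 ≤ ‖Complex.sinh (((r * Real.cos θ : ℝ):ℂ) + ((r * Real.sin θ : ℝ):ℂ) * Complex.I)‖ :=
    norm_nonneg _
  nlinarith [hsq]


lemma aux_gain {R θ : ℝ} (hR : 1 ≤ R) (hθ : |θ| ≤ Real.pi / 2) :
    ‖Complex.sinh ((R:ℂ) * Complex.exp (θ * Complex.I))‖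
      ≤ 4 * Real.exp (-(2 / Real.pi ^ 2) * (R * θ ^ 2)) * Real.sinh R := by
  have hpi : 0 < Real.pi := Real.pi_pos
  have hc : 0 ≤ Real.cos θ := by
    apply Real.cos_nonneg_of_mem_Icc
    constructor <;> [linarith [neg_abs_le θ]; linarith [le_abs_self θ]]
  have hRpos : (0:ℝ) < R := by linarith
  have hexp : (R:ℂ) * Complex.exp (θ * Complex.I)
      = ((R * Real.cos θ : ℝ):ℂ) + ((R * Real.sin θ : ℝ):ℂ) * Complex.I := by
    rw [Complex.exp_mul_I]; push_cast; ring
  rw [hexp]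
  have hsq := aux_sq_abs_sinh (R * Real.cos θ) (R * Real.sin θ)
  -- abs ≤ exp (R cos θ)
  have hsin1 : Real.sin (R * Real.sin θ) ^ 2 ≤ 1 := Real.sin_sq_le_one _
  have hcoshsq : Real.sinh (R * Real.cos θ)^2 + 1 = Real.cosh (R * Real.cos θ)^2 := by
    have := Real.cosh_sq_sub_sinh_sq (R * Real.cos θ); linarith
  have hcoshexp : Real.cosh (R * Real.cos θ) ≤ Real.exp (R * Real.cos θ) := by
    rw [Real.cosh_eq]
    have : Real.exp (-(R * Real.cos θ)) ≤ Real.exp (R * Real.cos θ) :=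
      Real.exp_le_exp.2 (by nlinarith)
    linarith
  have habs0 : 0 ≤ ‖Complex.sinh (((R * Real.cos θ : ℝ):ℂ) + ((R * Real.sin θ : ℝ):ℂ) * Complex.I)‖ :=
    norm_nonneg _
  have hstep : ‖Complex.sinh (((R * Real.cos θ : ℝ):ℂ) + ((R * Real.sin θ : ℝ):ℂ) * Complex.I)‖
      ≤ Real.exp (R * Real.cos θ) := by
    have hcosh0 : 0 ≤ Real.cosh (R * Real.cos θ) := (Real.cosh_pos _).le
    nlinarith [hsq]
  -- exp (R cos θ) ≤ exp(-(2/π²) R θ²) * exp R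
  have hcos2 : Real.cos θ ≤ 1 - 2 / Real.pi ^ 2 * θ ^ 2 :=
    Real.cos_le_one_sub_mul_cos_sq (by linarith)
  have hstep2 : Real.exp (R * Real.cos θ)
      ≤ Real.exp (-(2 / Real.pi ^ 2) * (R * θ ^ 2)) * Real.exp R := by
    rw [← Real.exp_add]
    apply Real.exp_le_exp.2
    nlinarith
  -- exp R ≤ 4 sinh R
  have hstep3 : Real.exp R ≤ 4 * Real.sinh R := by
    rw [Real.sinh_eq]
    have h1 : Real.exp (-R) ≤ Real.exp (-1) := Real.exp_le_exp.2 (by linarith)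
    have h2 : (2:ℝ) ≤ Real.exp 1 := by
      have := Real.add_one_le_exp 1; linarith
    have h3 : Real.exp (-1) ≤ 1/2 := by
      rw [Real.exp_neg]
      rw [inv_le_comm₀ (Real.exp_pos 1) (by norm_num)]
      linarith
    have h4 : (1:ℝ) ≤ Real.exp R := by
      have := Real.add_one_le_exp R; linarith
    linarith
  calc ‖Complex.sinh (((R * Real.cos θ : ℝ):ℂ) + ((R * Real.sin θ : ℝ):ℂ) * Complex.I)‖
      ≤ Real.exp (R * Real.cos θ) := hstep
    _ ≤ Real.exp (-(2 / Real.pi ^ 2) * (R * θ ^ 2)) * Real.exp R := hstep2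
    _ ≤ 4 * Real.exp (-(2 / Real.pi ^ 2) * (R * θ ^ 2)) * Real.sinh R := by
        have := Real.exp_pos (-(2 / Real.pi ^ 2) * (R * θ ^ 2))
        nlinarith

/-- Tail pruning in the saddle-point analysis: under the boundary scaling
assumption `|L(g)|/(12μg) → 1`, with `ρ_g = (6g−6+3n)/|L(g)|`, there are `c, C > 0` such
that for all large `g`, all `ℓ` in the compact set `K ⊂ ℝ_{>0}^m`, and all `θ` with
`g^{−2/5} ≤ |θ| ≤ π/2`:
`∏ᵢ |sinh(Lᵢρ e^{iθ})| · ∏ⱼ |sinh(ℓⱼρ e^{iθ})|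
  ≤ C e^{−c g^{1/5}} ∏ᵢ sinh(Lᵢρ) · ∏ⱼ sinh(ℓⱼρ)`. -/
theorem stmt13 (n m : ℕ) (hn : 1 ≤ n) (μ : ℝ) (hμ : 0 < μ)
    (K : Set (Fin m → ℝ)) (hK : IsCompact K) (hKpos : ∀ ℓ ∈ K, ∀ j, 0 < ℓ j)
    (L : ℕ → Fin n → ℝ) (hL : ∀ g i, 0 < L g i)
    (hscale : Tendsto (fun g : ℕ => (∑ i, L g i) / (12 * μ * g)) atTop (nhds 1))
    (ρ : ℕ → ℝ) (hρ : ∀ g, ρ g = ((6 * g + 3 * n - 6 : ℕ) : ℝ) / (∑ i, L g i)) :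
    ∃ c > 0, ∃ C > 0, ∃ g₀ : ℕ, ∀ g ≥ g₀, ∀ ℓ ∈ K, ∀ θ : ℝ,
      (g : ℝ) ^ (-(2 / 5) : ℝ) ≤ |θ| → |θ| ≤ Real.pi / 2 →
      (∏ i, ‖
          (Complex.sinh ((L g i * ρ g : ℝ) * Complex.exp (θ * Complex.I)))‖) *
        (∏ j, ‖
          (Complex.sinh ((ℓ j * ρ g : ℝ) * Complex.exp (θ * Complex.I)))‖) ≤
      C * Real.exp (-c * (g : ℝ) ^ ((1 : ℝ) / 5)) *
        (∏ i, Real.sinh (L g i * ρ g)) * ∏ j, Real.sinh (ℓ j * ρ g) := by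
  have hpi : 0 < Real.pi := Real.pi_pos
  have hnR : (0:ℝ) < n := by exact_mod_cast hn
  refine ⟨6 / ((n:ℝ) * Real.pi ^ 2), by positivity, 4, by norm_num, n, ?_⟩
  intro g hg ℓ hℓ θ hθ1 hθ2
  set c : ℝ := 6 / ((n:ℝ) * Real.pi ^ 2) with hc
  have hg1 : 1 ≤ g := le_trans hn hg
  have hgR : (0:ℝ) < g := by exact_mod_cast hg1
  have hSum : 0 < ∑ i, L g i :=
    Finset.sum_pos (fun i _ => hL g i) ⟨⟨0, hn⟩, Finset.mem_univ _⟩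
  have hNnat : 3 * g ≤ 6 * g + 3 * n - 6 := by omega
  have hNpos : (0:ℝ) < ((6 * g + 3 * n - 6 : ℕ) : ℝ) := by
    have : 0 < 6 * g + 3 * n - 6 := by omega
    exact_mod_cast this
  have hρpos : 0 < ρ g := by rw [hρ]; exact div_pos hNpos hSum
  have hsumρ : (∑ i, L g i) * ρ g = ((6 * g + 3 * n - 6 : ℕ) : ℝ) := by
    rw [hρ]; field_simp
  -- the largest boundary length
  obtain ⟨i₀, -, hi₀⟩ := Finset.exists_max_image (Finset.univ : Finset (Fin n))
    (fun i => L g i) ⟨⟨0, hn⟩, Finset.mem_univ _⟩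
  set R : ℝ := L g i₀ * ρ g with hRdef
  have hsumle : (∑ i, L g i) ≤ (n:ℝ) * L g i₀ := by
    calc (∑ i, L g i) ≤ ∑ _i : Fin n, L g i₀ :=
          Finset.sum_le_sum (fun i _ => hi₀ i (Finset.mem_univ i))
      _ = (n:ℝ) * L g i₀ := by simp [Finset.sum_const, mul_comm]
  have hNR : ((6 * g + 3 * n - 6 : ℕ) : ℝ) ≤ (n:ℝ) * R := by
    rw [← hsumρ, hRdef]
    have := mul_le_mul_of_nonneg_right hsumle hρpos.le
    linarith [this]
  have h3g : (3:ℝ) * g ≤ ((6 * g + 3 * n - 6 : ℕ) : ℝ) := by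
    have : ((3 * g : ℕ) : ℝ) ≤ ((6 * g + 3 * n - 6 : ℕ) : ℝ) := by exact_mod_cast hNnat
    push_cast at this; linarith
  have hR3g : 3 * (g:ℝ) / n ≤ R := by
    rw [div_le_iff₀ hnR]
    nlinarith
  have hR1 : 1 ≤ R := by
    have hng : (n:ℝ) ≤ g := by exact_mod_cast hg
    have : (1:ℝ) ≤ 3 * (g:ℝ) / n := by
      rw [le_div_iff₀ hnR]; nlinarith
    linarith
  -- θ² lower bound
  have hθsq : (g:ℝ) ^ (-(4/5) : ℝ) ≤ θ ^ 2 := by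
    have h1 : ((g:ℝ) ^ (-(2/5) : ℝ)) ^ 2 ≤ |θ| ^ 2 :=
      pow_le_pow_left₀ (Real.rpow_nonneg hgR.le _) hθ1 2
    rw [sq_abs] at h1
    calc (g:ℝ) ^ (-(4/5) : ℝ) = ((g:ℝ) ^ (-(2/5) : ℝ)) ^ (2:ℕ) := by
          rw [← Real.rpow_natCast ((g:ℝ) ^ (-(2/5) : ℝ)) 2, ← Real.rpow_mul hgR.le]
          norm_num
      _ ≤ θ ^ 2 := h1
  have hg15 : (g:ℝ) * (g:ℝ) ^ (-(4/5) : ℝ) = (g:ℝ) ^ ((1:ℝ)/5) := by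
    have : (g:ℝ) ^ ((1:ℝ)/5) = (g:ℝ) ^ ((1:ℝ) + -(4/5)) := by norm_num
    rw [this, Real.rpow_add hgR, Real.rpow_one]
  have hRθ : 3 / (n:ℝ) * (g:ℝ) ^ ((1:ℝ)/5) ≤ R * θ ^ 2 := by
    have h1 : 3 * (g:ℝ) / n * ((g:ℝ) ^ (-(4/5) : ℝ)) ≤ R * θ ^ 2 := by
      apply mul_le_mul hR3g hθsq (Real.rpow_nonneg hgR.le _) (by linarith)
    calc 3 / (n:ℝ) * (g:ℝ) ^ ((1:ℝ)/5) = 3 * (g:ℝ) / n * ((g:ℝ) ^ (-(4/5) : ℝ)) := by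
          rw [← hg15]; ring
      _ ≤ R * θ ^ 2 := h1
  -- the exponential gain
  have hexpgain : Real.exp (-(2 / Real.pi ^ 2) * (R * θ ^ 2))
      ≤ Real.exp (-c * (g:ℝ) ^ ((1:ℝ)/5)) := by
    apply Real.exp_le_exp.2
    have hkey : c * (g:ℝ) ^ ((1:ℝ)/5) ≤ 2 / Real.pi ^ 2 * (R * θ ^ 2) := by
      have h2 := mul_le_mul_of_nonneg_left hRθ (by positivity : (0:ℝ) ≤ 2 / Real.pi ^ 2)
      have heq : 2 / Real.pi ^ 2 * (3 / (n:ℝ) * (g:ℝ) ^ ((1:ℝ)/5))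
          = c * (g:ℝ) ^ ((1:ℝ)/5) := by
        rw [hc]; field_simp; ring
      linarith
    linarith
  have hA : ‖Complex.sinh ((L g i₀ * ρ g : ℝ) * Complex.exp (θ * Complex.I))‖
      ≤ 4 * Real.exp (-c * (g:ℝ) ^ ((1:ℝ)/5)) * Real.sinh R := by
    refine (aux_gain hR1 hθ2).trans ?_
    have hs : 0 ≤ Real.sinh R := Real.sinh_nonneg_iff.2 (by linarith)
    nlinarith [Real.exp_pos (-(2 / Real.pi ^ 2) * (R * θ ^ 2))]
  -- bound remaining factors
  have hPf : ∏ i ∈ Finset.univ.erase i₀,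
        ‖Complex.sinh ((L g i * ρ g : ℝ) * Complex.exp (θ * Complex.I))‖
      ≤ ∏ i ∈ Finset.univ.erase i₀, Real.sinh (L g i * ρ g) :=
    Finset.prod_le_prod (fun i _ => norm_nonneg _)
      (fun i _ => aux_abs_sinh_le (mul_nonneg (hL g i).le hρpos.le) hθ2)
  have hQf : ∏ j, ‖Complex.sinh ((ℓ j * ρ g : ℝ) * Complex.exp (θ * Complex.I))‖
      ≤ ∏ j, Real.sinh (ℓ j * ρ g) :=
    Finset.prod_le_prod (fun j _ => norm_nonneg _)
      (fun j _ => aux_abs_sinh_le (mul_nonneg (hKpos ℓ hℓ j).le hρpos.le) hθ2)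
  -- split off the i₀ factor
  rw [← Finset.mul_prod_erase Finset.univ
      (fun i => ‖Complex.sinh ((L g i * ρ g : ℝ) * Complex.exp (θ * Complex.I))‖)
      (Finset.mem_univ i₀),
    ← Finset.mul_prod_erase Finset.univ (fun i => Real.sinh (L g i * ρ g)) (Finset.mem_univ i₀)]
  have hPf0 : (0:ℝ) ≤ ∏ i ∈ Finset.univ.erase i₀,
      ‖Complex.sinh ((L g i * ρ g : ℝ) * Complex.exp (θ * Complex.I))‖ :=
    Finset.prod_nonneg (fun i _ => norm_nonneg _)
  have hQf0 : (0:ℝ) ≤ ∏ j, ‖Complex.sinh ((ℓ j * ρ g : ℝ) * Complex.exp (θ * Complex.I))‖ :=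
    Finset.prod_nonneg (fun j _ => norm_nonneg _)
  have hP0 : (0:ℝ) ≤ ∏ i ∈ Finset.univ.erase i₀, Real.sinh (L g i * ρ g) :=
    Finset.prod_nonneg (fun i _ => Real.sinh_nonneg_iff.2 (mul_nonneg (hL g i).le hρpos.le))
  have hQ0 : (0:ℝ) ≤ ∏ j, Real.sinh (ℓ j * ρ g) :=
    Finset.prod_nonneg (fun j _ => Real.sinh_nonneg_iff.2 (mul_nonneg (hKpos ℓ hℓ j).le hρpos.le))
  have hE0 : (0:ℝ) < Real.exp (-c * (g:ℝ) ^ ((1:ℝ)/5)) := Real.exp_pos _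
  have hS0 : (0:ℝ) ≤ Real.sinh R := Real.sinh_nonneg_iff.2 (by linarith)
  calc (‖Complex.sinh ((L g i₀ * ρ g : ℝ) * Complex.exp (θ * Complex.I))‖ *
          ∏ i ∈ Finset.univ.erase i₀,
            ‖Complex.sinh ((L g i * ρ g : ℝ) * Complex.exp (θ * Complex.I))‖) *
        ∏ j, ‖Complex.sinh ((ℓ j * ρ g : ℝ) * Complex.exp (θ * Complex.I))‖
      ≤ ((4 * Real.exp (-c * (g:ℝ) ^ ((1:ℝ)/5)) * Real.sinh R) *
          ∏ i ∈ Finset.univ.erase i₀, Real.sinh (L g i * ρ g)) *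
        ∏ j, Real.sinh (ℓ j * ρ g) := by
        apply mul_le_mul _ hQf hQf0
          (mul_nonneg (by positivity) hP0)
        exact mul_le_mul hA hPf hPf0 (by positivity)
    _ = 4 * Real.exp (-c * (g:ℝ) ^ ((1:ℝ)/5)) *
          (Real.sinh (L g i₀ * ρ g) * ∏ i ∈ Finset.univ.erase i₀, Real.sinh (L g i * ρ g)) *
        ∏ j, Real.sinh (ℓ j * ρ g) := by rw [hRdef]; ring
end
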